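/- arXiv:2005.12305 — 5 statements merged into one kernel-verified Lean document; each statement's English description precedes it below -/
import Mathlib

section
/- Let n ≥ 1, let t_1,…,t_n be nonnegative real numbers with t_j = 0 for some fixed j, and let x = Σ_{i=1}^n t_i (e_i − e_{i+1}). Then L_{j+1}(x) ≤ L_m(x) for every m ∈ {1,…,n}; consequently h(x) = L_{j+1}(x), i.e. h is linear on the cone Π_j = {Σ_{i≠j} t_i (e_i − e_{i+1}) : t_i ≥ 0} (indices mod n). -/
open Finset

/-- Cyclic successor in `Fin n` (so the index after `n` is `1`). -/
def csucc {n : ℕ} (x : Fin n) : Fin n :=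
  ⟨(x.val + 1) % n, Nat.mod_lt _ (Nat.lt_of_le_of_lt (Nat.zero_le _) x.isLt)⟩

/-- The linear functional `L_j(x) = Σ_{r=1}^{n−1} r·x_{j+r}` (subscripts mod `n`);
the `r = 0` term vanishes, so summing over all `r : Fin n` is the same. -/
def Lfun {n : ℕ} (j : Fin n) (x : Fin n → ℝ) : ℝ :=
  ∑ r : Fin n, (r.val : ℝ) * x (j + r)

/-- `h(x) = min_{1 ≤ j ≤ n} L_j(x)`. -/
noncomputable def hfun {n : ℕ} (x : Fin n → ℝ) : ℝ :=
  sInf (Set.range fun j : Fin n => Lfun j x)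

/-!
The point `x` has coordinates `x_i = t_i - t_{i-1}`, so cyclic summation by parts gives
`L_m(x) = n * t_{m-1} - Σ_i t_i`. As `t ≥ 0`, this is smallest exactly where `t_{m-1} = 0`,
in particular at `m = j + 1`.
-/

lemma csucc_eq_add_one {n : ℕ} [NeZero n] (x : Fin n) : csucc x = x + 1 := by
  ext
  simp only [csucc, Fin.val_add, Fin.val_one', Nat.add_mod_mod]

lemma Fin.val_add_one_sub_val {n : ℕ} [NeZero n] (a : Fin n) :
    ((a + 1 : Fin n).val : ℝ) - a.val = 1 - if a = -1 then (n : ℝ) else 0 := by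
  obtain ⟨k, rfl⟩ : ∃ k, n = k + 1 := Nat.exists_eq_succ_of_ne_zero (NeZero.ne n)
  have hlast : Fin.last k = -1 := eq_neg_of_add_eq_zero_left (Fin.last_add_one k)
  rw [Fin.val_add_one]
  split_ifs with h1 h2 h2
  · subst h1; simp
  · exact absurd (h1.trans hlast) h2
  · exact absurd (h2.trans hlast.symm) h1
  · push_cast; ring

lemma Fin.sum_val_mul_sub_sub_one {n : ℕ} [NeZero n] (f : Fin n → ℝ) :
    ∑ r : Fin n, (r.val : ℝ) * (f r - f (r - 1)) = n * f (-1) - ∑ r, f r := by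
  have hshift : ∑ r : Fin n, (r.val : ℝ) * f (r - 1)
      = ∑ r : Fin n, ((r + 1 : Fin n).val : ℝ) * f r :=
    Fintype.sum_equiv (Equiv.subRight 1) _ _ fun r => by simp
  calc ∑ r : Fin n, (r.val : ℝ) * (f r - f (r - 1))
      = -∑ r : Fin n, (((r + 1 : Fin n).val : ℝ) - r.val) * f r := by
        simp only [mul_sub, sum_sub_distrib, hshift, sub_mul]; ring
    _ = n * f (-1) - ∑ r, f r := by
        simp only [Fin.val_add_one_sub_val, sub_mul, one_mul, ite_mul, zero_mul,
          sum_sub_distrib, sum_ite_eq', mem_univ, if_true]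
        ring

lemma lfun_eq_of_eq_sub {n : ℕ} [NeZero n] {t x : Fin n → ℝ}
    (hx : ∀ i, x i = t i - t (i - 1)) (m : Fin n) : Lfun m x = n * t (m - 1) - ∑ i, t i := by
  have := Fin.sum_val_mul_sub_sub_one fun r => t (m + r)
  rw [show ∑ r, t (m + r) = ∑ i, t i from Equiv.sum_comp (Equiv.addLeft m) t] at this
  simp only [← add_sub_assoc, ← sub_eq_add_neg] at this
  simpa only [Lfun, hx] using this

lemma sum_mul_single_sub_single_csucc {n : ℕ} [NeZero n] (t : Fin n → ℝ) (i : Fin n) :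
    ∑ m : Fin n, t m * ((if i = m then 1 else 0) - (if i = csucc m then 1 else 0))
      = t i - t (i - 1) := by
  simp only [csucc_eq_add_one, ← sub_eq_iff_eq_add, eq_comm (a := i - 1), mul_sub, mul_ite,
    mul_one, mul_zero, sum_sub_distrib, sum_ite_eq, sum_ite_eq', mem_univ, if_true]

lemma hfun_eq_of_forall_le {n : ℕ} {x : Fin n → ℝ} {j : Fin n}
    (h : ∀ m, Lfun j x ≤ Lfun m x) :
    hfun x = Lfun j x :=
  IsLeast.csInf_eq ⟨⟨j, rfl⟩, Set.forall_mem_range.2 h⟩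

/-- if `t_1, …, t_n ≥ 0`, `t_j = 0`, and
`x = Σ_i t_i (e_i − e_{i+1})`, then `L_{j+1}(x) ≤ L_m(x)` for every `m`, and
consequently `h(x) = L_{j+1}(x)`; i.e. `h` is linear on the cone `Π_j`. -/
theorem stmt2 {n : ℕ} (hn : 1 ≤ n) (t : Fin n → ℝ) (ht : ∀ i, 0 ≤ t i)
    (j : Fin n) (htj : t j = 0) (x : Fin n → ℝ)
    (hx : ∀ i, x i = ∑ m : Fin n, t m *
      ((if i = m then 1 else 0) - (if i = csucc m then 1 else 0))) :
    (∀ m : Fin n, Lfun (csucc j) x ≤ Lfun m x) ∧ hfun x = Lfun (csucc j) x := by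
  have : NeZero n := ⟨by omega⟩
  have hL := lfun_eq_of_eq_sub fun i => (hx i).trans (sum_mul_single_sub_single_csucc t i)
  have hmin : ∀ m, Lfun (csucc j) x ≤ Lfun m x := fun m => by
    rw [hL, hL, csucc_eq_add_one, add_sub_cancel_right, htj, mul_zero]
    linarith [mul_nonneg (Nat.cast_nonneg n) (ht (m - 1))]
  exact ⟨hmin, hfun_eq_of_forall_le hmin⟩
end

section
/- Let 2 ≤ k and n ≥ k+2. Let I be any k-element subset of {1,…,n}, let J be a (k−2)-element subset of {1,…,n}, and let i_1, i_2, i_3, i_4 ∈ {1,…,n}∖J be pairwise distinct elements occurring in this cyclic order, i.e. (i_2−i_1 mod n) < (i_3−i_1 mod n) < (i_4−i_1 mod n). Then ρ_I(e_J + e_{i_1} + e_{i_3}) + ρ_I(e_J + e_{i_2} + e_{i_4}) = max( ρ_I(e_J + e_{i_1} + e_{i_2}) + ρ_I(e_J + e_{i_3} + e_{i_4}), ρ_I(e_J + e_{i_1} + e_{i_4}) + ρ_I(e_J + e_{i_2} + e_{i_3}) ). That is, the height function 𝔥_I = (ρ_I(e_K))_K over the vertices of the hypersimplex Δ_{k,n}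 satisfies the positive tropical Plücker relations. -/
open Finset

/-- `e_S = Σ_{j ∈ S} e_j`, the indicator vector of a subset `S ⊆ {1,…,n}`. -/
def ind {n : ℕ} (S : Finset (Fin n)) : Fin n → ℝ := fun i => if i ∈ S then 1 else 0

/-- The standard basis vector `e_j`. -/
def stdE {n : ℕ} (j : Fin n) : Fin n → ℝ := fun i => if i = j then 1 else 0

/-- `ρ_J(x) = h(x − e_J)`. -/
noncomputable def rho {n : ℕ} (J : Finset (Fin n)) (x : Fin n → ℝ) : ℝ :=
  hfun (x - ind J)

/-! ### Auxiliary definitions -/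

/-- Integer version of `Lfun`. -/
def LfunZ {n : ℕ} (j : Fin n) (w : Fin n → ℤ) : ℤ :=
  ∑ r : Fin n, (r.val : ℤ) * w (j + r)

/-- Cyclic distance from `j` back to `i1`. -/
def uu {n : ℕ} (i1 j : Fin n) : ℕ := (i1 - j).val

/-- Integer vector `e_J - e_I + 2 e_{i1}`. -/
def wz {n : ℕ} (I J : Finset (Fin n)) (i1 : Fin n) : Fin n → ℤ :=
  fun i => (if i ∈ J then 1 else 0) - (if i ∈ I then 1 else 0) + 2 * (if i = i1 then 1 else 0)

/-- The "base walk" `j ↦ L_j(e_J - e_I) + 2 (i1 - j).val`. -/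
noncomputable def baseF {n : ℕ} (I J : Finset (Fin n)) (i1 : Fin n) : Fin n → ℝ :=
  fun j => (LfunZ j (wz I J i1) : ℝ)

def R1 {n : ℕ} (i1 : Fin n) (t4 : ℕ) : Finset (Fin n) :=
  univ.filter (fun j => uu i1 j + t4 < n)
def R2 {n : ℕ} (i1 : Fin n) (t3 t4 : ℕ) : Finset (Fin n) :=
  univ.filter (fun j => n ≤ uu i1 j + t4 ∧ uu i1 j + t3 < n)
def R3 {n : ℕ} (i1 : Fin n) (t2 t3 : ℕ) : Finset (Fin n) :=
  univ.filter (fun j => n ≤ uu i1 j + t3 ∧ uu i1 j + t2 < n)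
def R4 {n : ℕ} (i1 : Fin n) (t2 : ℕ) : Finset (Fin n) :=
  univ.filter (fun j => n ≤ uu i1 j + t2)

def min4 {α : Type*} [LinearOrder α] (a b c d : α) : α := min (min a b) (min c d)

set_option linter.unusedSectionVars false

section Aux
variable {n : ℕ} [NeZero n]

lemma Lfun_stdE (j s : Fin n) : Lfun j (stdE s) = ((s - j).val : ℝ) := by
  unfold Lfun stdE
  rw [Finset.sum_eq_single_of_mem (s - j) (mem_univ _)]
  · simp [add_sub_cancel]
  · intro r _ hr
    have : j + r ≠ s := fun h => hr (by rw [← h, add_sub_cancel_left])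
    simp [this]

lemma hfun_inf' (hne : (univ : Finset (Fin n)).Nonempty) (x : Fin n → ℝ) :
    hfun x = univ.inf' hne (fun j => Lfun j x) := by
  rw [hfun, Finset.inf'_eq_csInf_image]
  congr 1
  rw [coe_univ, Set.image_univ]

lemma Lfun_intCast (j : Fin n) (w : Fin n → ℤ) :
    Lfun j (fun i => (w i : ℝ)) = (LfunZ j w : ℝ) := by
  simp [Lfun, LfunZ]

lemma Lfun_add (j : Fin n) (x y : Fin n → ℝ) : Lfun j (x + y) = Lfun j x + Lfun j y := by
  simp [Lfun, mul_add, Finset.sum_add_distrib]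

lemma Lfun_sub (j : Fin n) (x y : Fin n → ℝ) : Lfun j (x - y) = Lfun j x - Lfun j y := by
  simp [Lfun, mul_sub, Finset.sum_sub_distrib]

lemma LfunZ_reindex (j : Fin n) (w : Fin n → ℤ) :
    LfunZ j w = ∑ i : Fin n, ((i - j).val : ℤ) * w i := by
  unfold LfunZ
  exact Fintype.sum_equiv (Equiv.addLeft j) _ _ (fun r => by simp [add_sub_cancel_left])

lemma LfunZ_dvd_sub (w : Fin n → ℤ) (hw : ∑ i : Fin n, w i = 0) (j j' : Fin n) :
    (n : ℤ) ∣ LfunZ j w - LfunZ j' w := by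
  suffices h : ∀ j : Fin n, (n : ℤ) ∣ LfunZ j w - LfunZ 0 w by
    have := dvd_sub (h j) (h j'); simpa using this
  intro j
  have key : LfunZ j w - LfunZ 0 w = ∑ i : Fin n, (((i - j).val : ℤ) + j.val - i.val) * w i := by
    rw [LfunZ_reindex, LfunZ_reindex]
    have : ∑ i : Fin n, (((i - j).val : ℤ) + j.val - i.val) * w i
        = ∑ i : Fin n, (((i - j).val : ℤ) * w i) + (j.val : ℤ) * ∑ i : Fin n, w i
          - ∑ i : Fin n, ((i.val : ℤ) * w i) := by
      rw [Finset.mul_sum, ← Finset.sum_add_distrib, ← Finset.sum_sub_distrib]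
      exact Finset.sum_congr rfl (fun i _ => by ring)
    rw [this, hw]
    simp [sub_zero]
  rw [key]
  apply Finset.dvd_sum
  intro i _
  have hmod : ((i - j).val + j.val) % n = i.val := by
    rw [← Fin.val_add, sub_add_cancel]
  have h1 : (i - j).val < n := (i - j).isLt
  have h2 : j.val < n := j.isLt
  have h3 : i.val < n := i.isLt
  have : ((i - j).val : ℤ) + j.val - i.val = 0 ∨ ((i - j).val : ℤ) + j.val - i.val = n := by
    rcases Nat.lt_or_ge ((i - j).val + j.val) n with h | h
    · left; rw [Nat.mod_eq_of_lt h] at hmod; omega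
    · right
      rw [Nat.mod_eq_sub_mod h, Nat.mod_eq_of_lt (by omega)] at hmod
      omega
  rcases this with h | h <;> rw [h]
  · simp
  · exact Dvd.intro _ rfl

lemma val_split (i1 m j : Fin n) : (m - j).val = ((m - i1).val + uu i1 j) % n := by
  have h : m - j = (m - i1) + (i1 - j) := by rw [sub_add_sub_cancel]
  rw [h, Fin.val_add]; rfl

lemma val_lt (i1 m j : Fin n) (h : (m - i1).val + uu i1 j < n) :
    (m - j).val = (m - i1).val + uu i1 j := by
  rw [val_split i1 m j, Nat.mod_eq_of_lt h]

lemma val_ge (i1 m j : Fin n) (h : n ≤ (m - i1).val + uu i1 j) :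
    (m - j).val = (m - i1).val + uu i1 j - n := by
  have h1 : (m - i1).val < n := (m - i1).isLt
  have h2 : uu i1 j < n := (i1 - j).isLt
  rw [val_split i1 m j, Nat.mod_eq_sub_mod h, Nat.mod_eq_of_lt (by omega)]

lemma valR_lt (i1 m j : Fin n) (h : (m - i1).val + uu i1 j < n) :
    ((m - j).val : ℝ) = ((m - i1).val : ℝ) + (uu i1 j : ℝ) := by
  rw [val_lt i1 m j h]; push_cast; ring

lemma valR_ge (i1 m j : Fin n) (h : n ≤ (m - i1).val + uu i1 j) :
    ((m - j).val : ℝ) = ((m - i1).val : ℝ) + (uu i1 j : ℝ) - (n : ℝ) := by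
  rw [val_ge i1 m j h, Nat.cast_sub h]; push_cast; ring

lemma baseF_eq (I J : Finset (Fin n)) (i1 j : Fin n) :
    baseF I J i1 j = Lfun j (ind J) - Lfun j (ind I) + 2 * (uu i1 j : ℝ) := by
  unfold baseF
  rw [← Lfun_intCast]
  have hfun_eq : (fun i => ((wz I J i1 i : ℤ) : ℝ))
      = (ind J - ind I) + (stdE i1 + stdE i1) := by
    funext i
    simp only [wz, ind, stdE, Pi.add_apply, Pi.sub_apply]
    split_ifs <;> norm_num
  rw [hfun_eq, Lfun_add, Lfun_sub, Lfun_add, Lfun_stdE]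
  unfold uu; ring

lemma Lfun_pair (I J : Finset (Fin n)) (i1 a b j : Fin n) :
    Lfun j (ind J + stdE a + stdE b - ind I)
      = baseF I J i1 j - 2 * (uu i1 j : ℝ) + ((a - j).val : ℝ) + ((b - j).val : ℝ) := by
  rw [Lfun_sub, Lfun_add, Lfun_add, Lfun_stdE, Lfun_stdE, baseF_eq]
  ring

lemma exists_uu (i1 : Fin n) (v : ℕ) (hv : v < n) : ∃ j : Fin n, uu i1 j = v :=
  ⟨i1 - ⟨v, hv⟩, by simp [uu, sub_sub_cancel]⟩

lemma wz_sum (I J : Finset (Fin n)) (i1 : Fin n) :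
    ∑ i : Fin n, wz I J i1 i = (J.card : ℤ) - (I.card : ℤ) + 2 := by
  unfold wz
  rw [Finset.sum_add_distrib, Finset.sum_sub_distrib, ← Finset.mul_sum]
  simp [Finset.sum_ite_mem, Finset.univ_inter, Finset.sum_ite_eq']

lemma F_formula (I J : Finset (Fin n)) (i1 a b : Fin n)
    (t2 t3 t4 : ℕ) (h23 : t2 < t3) (h34 : t3 < t4) (h4 : t4 < n)
    (Hu : (univ : Finset (Fin n)).Nonempty)
    (H1 : (R1 i1 t4).Nonempty) (H2 : (R2 i1 t3 t4).Nonempty)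
    (H3 : (R3 i1 t2 t3).Nonempty) (H4 : (R4 i1 t2).Nonempty)
    (o1 o2 o3 o4 : ℝ)
    (ho1 : ∀ j ∈ R1 i1 t4, ((a - j).val : ℝ) + ((b - j).val : ℝ) = 2 * (uu i1 j : ℝ) + o1)
    (ho2 : ∀ j ∈ R2 i1 t3 t4, ((a - j).val : ℝ) + ((b - j).val : ℝ) = 2 * (uu i1 j : ℝ) + o2)
    (ho3 : ∀ j ∈ R3 i1 t2 t3, ((a - j).val : ℝ) + ((b - j).val : ℝ) = 2 * (uu i1 j : ℝ) + o3)
    (ho4 : ∀ j ∈ R4 i1 t2, ((a - j).val : ℝ) + ((b - j).val : ℝ) = 2 * (uu i1 j : ℝ) + o4) :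
    univ.inf' Hu (fun j => Lfun j (ind J + stdE a + stdE b - ind I))
      = min4 ((R1 i1 t4).inf' H1 (baseF I J i1) + o1)
             ((R2 i1 t3 t4).inf' H2 (baseF I J i1) + o2)
             ((R3 i1 t2 t3).inf' H3 (baseF I J i1) + o3)
             ((R4 i1 t2).inf' H4 (baseF I J i1) + o4) := by
  set f := fun j => Lfun j (ind J + stdE a + stdE b - ind I) with hf
  have hval1 : ∀ j ∈ R1 i1 t4, f j = baseF I J i1 j + o1 := by
    intro j hj; rw [hf]; simp only []
    rw [Lfun_pair I J i1 a b j]; have := ho1 j hj; linarith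
  have hval2 : ∀ j ∈ R2 i1 t3 t4, f j = baseF I J i1 j + o2 := by
    intro j hj; rw [hf]; simp only []
    rw [Lfun_pair I J i1 a b j]; have := ho2 j hj; linarith
  have hval3 : ∀ j ∈ R3 i1 t2 t3, f j = baseF I J i1 j + o3 := by
    intro j hj; rw [hf]; simp only []
    rw [Lfun_pair I J i1 a b j]; have := ho3 j hj; linarith
  have hval4 : ∀ j ∈ R4 i1 t2, f j = baseF I J i1 j + o4 := by
    intro j hj; rw [hf]; simp only []
    rw [Lfun_pair I J i1 a b j]; have := ho4 j hj; linarith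
  apply le_antisymm
  · refine le_min (le_min ?_ ?_) (le_min ?_ ?_)
    · obtain ⟨j0, hj0m, hj0⟩ := Finset.exists_mem_eq_inf' H1 (baseF I J i1)
      calc univ.inf' Hu f ≤ f j0 := Finset.inf'_le f (mem_univ j0)
        _ = _ := by rw [hval1 j0 hj0m, hj0]
    · obtain ⟨j0, hj0m, hj0⟩ := Finset.exists_mem_eq_inf' H2 (baseF I J i1)
      calc univ.inf' Hu f ≤ f j0 := Finset.inf'_le f (mem_univ j0)
        _ = _ := by rw [hval2 j0 hj0m, hj0]
    · obtain ⟨j0, hj0m, hj0⟩ := Finset.exists_mem_eq_inf' H3 (baseF I J i1)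
      calc univ.inf' Hu f ≤ f j0 := Finset.inf'_le f (mem_univ j0)
        _ = _ := by rw [hval3 j0 hj0m, hj0]
    · obtain ⟨j0, hj0m, hj0⟩ := Finset.exists_mem_eq_inf' H4 (baseF I J i1)
      calc univ.inf' Hu f ≤ f j0 := Finset.inf'_le f (mem_univ j0)
        _ = _ := by rw [hval4 j0 hj0m, hj0]
  · obtain ⟨j1, _, hj1⟩ := Finset.exists_mem_eq_inf' Hu f
    rw [hj1]
    rcases Nat.lt_or_ge (uu i1 j1 + t4) n with hc1 | hc1
    · have hm : j1 ∈ R1 i1 t4 := by simp [R1, hc1]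
      calc min4 _ _ _ _ ≤ (R1 i1 t4).inf' H1 (baseF I J i1) + o1 :=
            le_trans (min_le_left _ _) (min_le_left _ _)
        _ ≤ baseF I J i1 j1 + o1 := by
            have := Finset.inf'_le (baseF I J i1) hm; linarith
        _ = f j1 := (hval1 j1 hm).symm
    · rcases Nat.lt_or_ge (uu i1 j1 + t3) n with hc2 | hc2
      · have hm : j1 ∈ R2 i1 t3 t4 := by simp [R2, hc1, hc2]
        calc min4 _ _ _ _ ≤ (R2 i1 t3 t4).inf' H2 (baseF I J i1) + o2 :=
              le_trans (min_le_left _ _) (min_le_right _ _)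
          _ ≤ baseF I J i1 j1 + o2 := by
              have := Finset.inf'_le (baseF I J i1) hm; linarith
          _ = f j1 := (hval2 j1 hm).symm
      · rcases Nat.lt_or_ge (uu i1 j1 + t2) n with hc3 | hc3
        · have hm : j1 ∈ R3 i1 t2 t3 := by simp [R3, hc2, hc3]
          calc min4 _ _ _ _ ≤ (R3 i1 t2 t3).inf' H3 (baseF I J i1) + o3 :=
                le_trans (min_le_right _ _) (min_le_left _ _)
            _ ≤ baseF I J i1 j1 + o3 := by
                have := Finset.inf'_le (baseF I J i1) hm; linarith
            _ = f j1 := (hval3 j1 hm).symm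
        · have hm : j1 ∈ R4 i1 t2 := by simp [R4, hc3]
          calc min4 _ _ _ _ ≤ (R4 i1 t2).inf' H4 (baseF I J i1) + o4 :=
                le_trans (min_le_right _ _) (min_le_right _ _)
            _ ≤ baseF I J i1 j1 + o4 := by
                have := Finset.inf'_le (baseF I J i1) hm; linarith
            _ = f j1 := (hval4 j1 hm).symm

end Aux

lemma min_cast_shift (A N : ℝ) (hN : 0 < N) (T : ℝ) (x y : ℤ) :
    min (A + N * (x : ℝ) + T) (A + N * (y : ℝ) + T) = A + N * ((min x y : ℤ) : ℝ) + T := by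
  rcases le_total x y with h | h
  · rw [min_eq_left h, min_eq_left]
    have : (x : ℝ) ≤ y := by exact_mod_cast h
    nlinarith
  · rw [min_eq_right h, min_eq_right]
    have : (y : ℝ) ≤ x := by exact_mod_cast h
    nlinarith

lemma min4_cast_shift (A N : ℝ) (hN : 0 < N) (T : ℝ) (x y z w : ℤ) :
    min4 (A + N * (x : ℝ) + T) (A + N * (y : ℝ) + T) (A + N * (z : ℝ) + T) (A + N * (w : ℝ) + T)
      = A + N * ((min4 x y z w : ℤ) : ℝ) + T := by
  unfold min4
  rw [min_cast_shift A N hN T x y, min_cast_shift A N hN T z w,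
    min_cast_shift A N hN T (min x y) (min z w)]

lemma key_identity (N : ℝ) (hN : 0 < N) (A B C D : ℝ)
    (hB : ∃ m : ℤ, B = A + N * m) (hC : ∃ m : ℤ, C = A + N * m)
    (hD : ∃ m : ℤ, D = A + N * m) (T2 T3 T4 : ℝ) :
    min4 (A + T3) (B + T3) (C + (T3 - N)) (D + (T3 - N))
      + min4 (A + (T2 + T4)) (B + (T2 + T4 - N)) (C + (T2 + T4 - N)) (D + (T2 + T4 - 2 * N))
    = max (min4 (A + T2) (B + T2) (C + T2) (D + (T2 - N))
            + min4 (A + (T3 + T4)) (B + (T3 + T4 - N)) (C + (T3 + T4 - 2 * N)) (D + (T3 + T4 - 2 * N)))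
          (min4 (A + T4) (B + (T4 - N)) (C + (T4 - N)) (D + (T4 - N))
            + min4 (A + (T2 + T3)) (B + (T2 + T3)) (C + (T2 + T3 - N)) (D + (T2 + T3 - 2 * N))) := by
  obtain ⟨zb, rfl⟩ := hB
  obtain ⟨zc, rfl⟩ := hC
  obtain ⟨zd, rfl⟩ := hD
  have E1 : min4 (A + T3) (A + N * zb + T3) (A + N * zc + (T3 - N)) (A + N * zd + (T3 - N))
      = A + N * ((min4 0 zb (zc - 1) (zd - 1) : ℤ) : ℝ) + T3 := by
    rw [← min4_cast_shift A N hN T3 0 zb (zc - 1) (zd - 1)]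
    congr 1 <;> push_cast <;> ring
  have E2 : min4 (A + (T2 + T4)) (A + N * zb + (T2 + T4 - N)) (A + N * zc + (T2 + T4 - N))
        (A + N * zd + (T2 + T4 - 2 * N))
      = A + N * ((min4 0 (zb - 1) (zc - 1) (zd - 2) : ℤ) : ℝ) + (T2 + T4) := by
    rw [← min4_cast_shift A N hN (T2 + T4) 0 (zb - 1) (zc - 1) (zd - 2)]
    congr 1 <;> push_cast <;> ring
  have E3 : min4 (A + T2) (A + N * zb + T2) (A + N * zc + T2) (A + N * zd + (T2 - N))
      = A + N * ((min4 0 zb zc (zd - 1) : ℤ) : ℝ) + T2 := by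
    rw [← min4_cast_shift A N hN T2 0 zb zc (zd - 1)]
    congr 1 <;> push_cast <;> ring
  have E4 : min4 (A + (T3 + T4)) (A + N * zb + (T3 + T4 - N)) (A + N * zc + (T3 + T4 - 2 * N))
        (A + N * zd + (T3 + T4 - 2 * N))
      = A + N * ((min4 0 (zb - 1) (zc - 2) (zd - 2) : ℤ) : ℝ) + (T3 + T4) := by
    rw [← min4_cast_shift A N hN (T3 + T4) 0 (zb - 1) (zc - 2) (zd - 2)]
    congr 1 <;> push_cast <;> ring
  have E5 : min4 (A + T4) (A + N * zb + (T4 - N)) (A + N * zc + (T4 - N)) (A + N * zd + (T4 - N))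
      = A + N * ((min4 0 (zb - 1) (zc - 1) (zd - 1) : ℤ) : ℝ) + T4 := by
    rw [← min4_cast_shift A N hN T4 0 (zb - 1) (zc - 1) (zd - 1)]
    congr 1 <;> push_cast <;> ring
  have E6 : min4 (A + (T2 + T3)) (A + N * zb + (T2 + T3)) (A + N * zc + (T2 + T3 - N))
        (A + N * zd + (T2 + T3 - 2 * N))
      = A + N * ((min4 0 zb (zc - 1) (zd - 2) : ℤ) : ℝ) + (T2 + T3) := by
    rw [← min4_cast_shift A N hN (T2 + T3) 0 zb (zc - 1) (zd - 2)]
    congr 1 <;> push_cast <;> ring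
  rw [E1, E2, E3, E4, E5, E6]
  have hint : min4 0 zb (zc - 1) (zd - 1) + min4 0 (zb - 1) (zc - 1) (zd - 2)
      = max (min4 0 zb zc (zd - 1) + min4 0 (zb - 1) (zc - 2) (zd - 2))
            (min4 0 (zb - 1) (zc - 1) (zd - 1) + min4 0 zb (zc - 1) (zd - 2)) := by
    simp only [min4]; omega
  rcases le_total (min4 0 zb zc (zd - 1) + min4 0 (zb - 1) (zc - 2) (zd - 2))
      (min4 0 (zb - 1) (zc - 1) (zd - 1) + min4 0 zb (zc - 1) (zd - 2)) with h | h
  · rw [max_eq_right h] at hint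
    have hr : ((min4 0 zb (zc - 1) (zd - 1) : ℤ) : ℝ) + ((min4 0 (zb - 1) (zc - 1) (zd - 2) : ℤ) : ℝ)
        = ((min4 0 (zb - 1) (zc - 1) (zd - 1) : ℤ) : ℝ) + ((min4 0 zb (zc - 1) (zd - 2) : ℤ) : ℝ) := by
      exact_mod_cast congrArg (fun z : ℤ => (z : ℝ)) hint
    have hle : ((min4 0 zb zc (zd - 1) : ℤ) : ℝ) + ((min4 0 (zb - 1) (zc - 2) (zd - 2) : ℤ) : ℝ)
        ≤ ((min4 0 (zb - 1) (zc - 1) (zd - 1) : ℤ) : ℝ) + ((min4 0 zb (zc - 1) (zd - 2) : ℤ) : ℝ) := by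
      exact_mod_cast h
    rw [max_eq_right (by nlinarith)]
    linear_combination N * hr
  · rw [max_eq_left h] at hint
    have hr : ((min4 0 zb (zc - 1) (zd - 1) : ℤ) : ℝ) + ((min4 0 (zb - 1) (zc - 1) (zd - 2) : ℤ) : ℝ)
        = ((min4 0 zb zc (zd - 1) : ℤ) : ℝ) + ((min4 0 (zb - 1) (zc - 2) (zd - 2) : ℤ) : ℝ) := by
      exact_mod_cast congrArg (fun z : ℤ => (z : ℝ)) hint
    have hle : ((min4 0 (zb - 1) (zc - 1) (zd - 1) : ℤ) : ℝ) + ((min4 0 zb (zc - 1) (zd - 2) : ℤ) : ℝ)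
        ≤ ((min4 0 zb zc (zd - 1) : ℤ) : ℝ) + ((min4 0 (zb - 1) (zc - 2) (zd - 2) : ℤ) : ℝ) := by
      exact_mod_cast h
    rw [max_eq_left (by nlinarith)]
    linear_combination N * hr


/-- the height function `𝔥_I = (ρ_I(e_K))_K` over the vertices of
the hypersimplex `Δ_{k,n}` satisfies the positive tropical Plücker relations:
for `i_1, i_2, i_3, i_4 ∉ J` pairwise distinct in cyclic order,
`ρ_I(e_J + e_{i_1} + e_{i_3}) + ρ_I(e_J + e_{i_2} + e_{i_4})` equals the maximum
of `ρ_I(e_J+e_{i_1}+e_{i_2}) + ρ_I(e_J+e_{i_3}+e_{i_4})` and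
`ρ_I(e_J+e_{i_1}+e_{i_4}) + ρ_I(e_J+e_{i_2}+e_{i_3})`. -/


theorem stmt4 {n k : ℕ} (hk : 2 ≤ k) (hn : k + 2 ≤ n)
    (I : Finset (Fin n)) (hI : I.card = k)
    (J : Finset (Fin n)) (hJ : J.card = k - 2)
    (i1 i2 i3 i4 : Fin n)
    (hi1 : i1 ∉ J) (hi2 : i2 ∉ J) (hi3 : i3 ∉ J) (hi4 : i4 ∉ J)
    (h12 : i1 ≠ i2) (h13 : i1 ≠ i3) (h14 : i1 ≠ i4)
    (h23 : i2 ≠ i3) (h24 : i2 ≠ i4) (h34 : i3 ≠ i4)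
    (hc1 : (i2 - i1).val < (i3 - i1).val) (hc2 : (i3 - i1).val < (i4 - i1).val) :
    rho I (ind J + stdE i1 + stdE i3) + rho I (ind J + stdE i2 + stdE i4) =
      max (rho I (ind J + stdE i1 + stdE i2) + rho I (ind J + stdE i3 + stdE i4))
          (rho I (ind J + stdE i1 + stdE i4) + rho I (ind J + stdE i2 + stdE i3)) := by
  haveI : NeZero n := ⟨by omega⟩
  have hn0 : 0 < n := by omega
  have ht4 : (i4 - i1).val < n := (i4 - i1).isLt
  have ht2pos : 0 < (i2 - i1).val := by
    rcases Nat.eq_zero_or_pos (i2 - i1).val with h | h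
    · exact absurd (Fin.ext (by simp [h]) : i2 - i1 = 0) (sub_ne_zero_of_ne h12.symm)
    · exact h
  have hT1 : (i1 - i1).val = 0 := by simp
  have Hu : (univ : Finset (Fin n)).Nonempty := ⟨⟨0, hn0⟩, mem_univ _⟩
  have hsum : ∑ i : Fin n, wz I J i1 i = 0 := by
    rw [wz_sum, hI, hJ]; omega
  obtain ⟨ja, hja⟩ := exists_uu i1 0 hn0
  have H1 : (R1 i1 (i4 - i1).val).Nonempty :=
    ⟨ja, by simp only [R1, mem_filter, mem_univ, true_and]; omega⟩
  obtain ⟨jb, hjb⟩ := exists_uu i1 (n - (i4 - i1).val) (by omega)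
  have H2 : (R2 i1 (i3 - i1).val (i4 - i1).val).Nonempty :=
    ⟨jb, by simp only [R2, mem_filter, mem_univ, true_and]; omega⟩
  obtain ⟨jc, hjc⟩ := exists_uu i1 (n - (i3 - i1).val) (by omega)
  have H3 : (R3 i1 (i2 - i1).val (i3 - i1).val).Nonempty :=
    ⟨jc, by simp only [R3, mem_filter, mem_univ, true_and]; omega⟩
  obtain ⟨jd, hjd⟩ := exists_uu i1 (n - (i2 - i1).val) (by omega)
  have H4 : (R4 i1 (i2 - i1).val).Nonempty :=
    ⟨jd, by simp only [R4, mem_filter, mem_univ, true_and]; omega⟩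
  have hcong : ∀ (R : Finset (Fin n)) (hR : R.Nonempty),
      ∃ m : ℤ, R.inf' hR (baseF I J i1)
        = (R1 i1 (i4 - i1).val).inf' H1 (baseF I J i1) + (n : ℝ) * m := by
    intro R hR
    obtain ⟨jx, _, hx⟩ := Finset.exists_mem_eq_inf' hR (baseF I J i1)
    obtain ⟨jy, _, hy⟩ := Finset.exists_mem_eq_inf' H1 (baseF I J i1)
    obtain ⟨m, hm⟩ := LfunZ_dvd_sub (wz I J i1) hsum jx jy
    refine ⟨m, ?_⟩
    rw [hx, hy]
    unfold baseF
    have hmr := congrArg (fun z : ℤ => (z : ℝ)) hm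
    push_cast at hmr
    linarith
  obtain ⟨mB, hB⟩ := hcong _ H2
  obtain ⟨mC, hC⟩ := hcong _ H3
  obtain ⟨mD, hD⟩ := hcong _ H4
  have e13 := F_formula I J i1 i1 i3 ((i2 - i1).val) ((i3 - i1).val) ((i4 - i1).val)
      hc1 hc2 ht4 Hu H1 H2 H3 H4
      (((i3 - i1).val : ℝ)) (((i3 - i1).val : ℝ)) (((i3 - i1).val : ℝ) - (n : ℝ)) (((i3 - i1).val : ℝ) - (n : ℝ))
      (by
        intro j hj
        simp only [R1, mem_filter, mem_univ, true_and] at hj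
        have hu : uu i1 j < n := (i1 - j).isLt
        rw [valR_lt i1 i1 j (by omega), valR_lt i1 i3 j (by omega)]
        push_cast [hT1]; ring)
      (by
        intro j hj
        simp only [R2, mem_filter, mem_univ, true_and] at hj
        have hu : uu i1 j < n := (i1 - j).isLt
        rw [valR_lt i1 i1 j (by omega), valR_lt i1 i3 j (by omega)]
        push_cast [hT1]; ring)
      (by
        intro j hj
        simp only [R3, mem_filter, mem_univ, true_and] at hj
        have hu : uu i1 j < n := (i1 - j).isLt
        rw [valR_lt i1 i1 j (by omega), valR_ge i1 i3 j (by omega)]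
        push_cast [hT1]; ring)
      (by
        intro j hj
        simp only [R4, mem_filter, mem_univ, true_and] at hj
        have hu : uu i1 j < n := (i1 - j).isLt
        rw [valR_lt i1 i1 j (by omega), valR_ge i1 i3 j (by omega)]
        push_cast [hT1]; ring)
  have e24 := F_formula I J i1 i2 i4 ((i2 - i1).val) ((i3 - i1).val) ((i4 - i1).val)
      hc1 hc2 ht4 Hu H1 H2 H3 H4
      (((i2 - i1).val : ℝ) + ((i4 - i1).val : ℝ)) (((i2 - i1).val : ℝ) + ((i4 - i1).val : ℝ) - (n : ℝ)) (((i2 - i1).val : ℝ) + ((i4 - i1).val : ℝ) - (n : ℝ)) (((i2 - i1).val : ℝ) + ((i4 - i1).val : ℝ) - 2 * (n : ℝ))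
      (by
        intro j hj
        simp only [R1, mem_filter, mem_univ, true_and] at hj
        have hu : uu i1 j < n := (i1 - j).isLt
        rw [valR_lt i1 i2 j (by omega), valR_lt i1 i4 j (by omega)]
        push_cast [hT1]; ring)
      (by
        intro j hj
        simp only [R2, mem_filter, mem_univ, true_and] at hj
        have hu : uu i1 j < n := (i1 - j).isLt
        rw [valR_lt i1 i2 j (by omega), valR_ge i1 i4 j (by omega)]
        push_cast [hT1]; ring)
      (by
        intro j hj
        simp only [R3, mem_filter, mem_univ, true_and] at hj
        have hu : uu i1 j < n := (i1 - j).isLt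
        rw [valR_lt i1 i2 j (by omega), valR_ge i1 i4 j (by omega)]
        push_cast [hT1]; ring)
      (by
        intro j hj
        simp only [R4, mem_filter, mem_univ, true_and] at hj
        have hu : uu i1 j < n := (i1 - j).isLt
        rw [valR_ge i1 i2 j (by omega), valR_ge i1 i4 j (by omega)]
        push_cast [hT1]; ring)
  have e12 := F_formula I J i1 i1 i2 ((i2 - i1).val) ((i3 - i1).val) ((i4 - i1).val)
      hc1 hc2 ht4 Hu H1 H2 H3 H4
      (((i2 - i1).val : ℝ)) (((i2 - i1).val : ℝ)) (((i2 - i1).val : ℝ)) (((i2 - i1).val : ℝ) - (n : ℝ))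
      (by
        intro j hj
        simp only [R1, mem_filter, mem_univ, true_and] at hj
        have hu : uu i1 j < n := (i1 - j).isLt
        rw [valR_lt i1 i1 j (by omega), valR_lt i1 i2 j (by omega)]
        push_cast [hT1]; ring)
      (by
        intro j hj
        simp only [R2, mem_filter, mem_univ, true_and] at hj
        have hu : uu i1 j < n := (i1 - j).isLt
        rw [valR_lt i1 i1 j (by omega), valR_lt i1 i2 j (by omega)]
        push_cast [hT1]; ring)
      (by
        intro j hj
        simp only [R3, mem_filter, mem_univ, true_and] at hj
        have hu : uu i1 j < n := (i1 - j).isLt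
        rw [valR_lt i1 i1 j (by omega), valR_lt i1 i2 j (by omega)]
        push_cast [hT1]; ring)
      (by
        intro j hj
        simp only [R4, mem_filter, mem_univ, true_and] at hj
        have hu : uu i1 j < n := (i1 - j).isLt
        rw [valR_lt i1 i1 j (by omega), valR_ge i1 i2 j (by omega)]
        push_cast [hT1]; ring)
  have e34 := F_formula I J i1 i3 i4 ((i2 - i1).val) ((i3 - i1).val) ((i4 - i1).val)
      hc1 hc2 ht4 Hu H1 H2 H3 H4
      (((i3 - i1).val : ℝ) + ((i4 - i1).val : ℝ)) (((i3 - i1).val : ℝ) + ((i4 - i1).val : ℝ) - (n : ℝ)) (((i3 - i1).val : ℝ) + ((i4 - i1).val : ℝ) - 2 * (n : ℝ)) (((i3 - i1).val : ℝ) + ((i4 - i1).val : ℝ) - 2 * (n : ℝ))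
      (by
        intro j hj
        simp only [R1, mem_filter, mem_univ, true_and] at hj
        have hu : uu i1 j < n := (i1 - j).isLt
        rw [valR_lt i1 i3 j (by omega), valR_lt i1 i4 j (by omega)]
        push_cast [hT1]; ring)
      (by
        intro j hj
        simp only [R2, mem_filter, mem_univ, true_and] at hj
        have hu : uu i1 j < n := (i1 - j).isLt
        rw [valR_lt i1 i3 j (by omega), valR_ge i1 i4 j (by omega)]
        push_cast [hT1]; ring)
      (by
        intro j hj
        simp only [R3, mem_filter, mem_univ, true_and] at hj
        have hu : uu i1 j < n := (i1 - j).isLt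
        rw [valR_ge i1 i3 j (by omega), valR_ge i1 i4 j (by omega)]
        push_cast [hT1]; ring)
      (by
        intro j hj
        simp only [R4, mem_filter, mem_univ, true_and] at hj
        have hu : uu i1 j < n := (i1 - j).isLt
        rw [valR_ge i1 i3 j (by omega), valR_ge i1 i4 j (by omega)]
        push_cast [hT1]; ring)
  have e14 := F_formula I J i1 i1 i4 ((i2 - i1).val) ((i3 - i1).val) ((i4 - i1).val)
      hc1 hc2 ht4 Hu H1 H2 H3 H4
      (((i4 - i1).val : ℝ)) (((i4 - i1).val : ℝ) - (n : ℝ)) (((i4 - i1).val : ℝ) - (n : ℝ)) (((i4 - i1).val : ℝ) - (n : ℝ))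
      (by
        intro j hj
        simp only [R1, mem_filter, mem_univ, true_and] at hj
        have hu : uu i1 j < n := (i1 - j).isLt
        rw [valR_lt i1 i1 j (by omega), valR_lt i1 i4 j (by omega)]
        push_cast [hT1]; ring)
      (by
        intro j hj
        simp only [R2, mem_filter, mem_univ, true_and] at hj
        have hu : uu i1 j < n := (i1 - j).isLt
        rw [valR_lt i1 i1 j (by omega), valR_ge i1 i4 j (by omega)]
        push_cast [hT1]; ring)
      (by
        intro j hj
        simp only [R3, mem_filter, mem_univ, true_and] at hj
        have hu : uu i1 j < n := (i1 - j).isLt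
        rw [valR_lt i1 i1 j (by omega), valR_ge i1 i4 j (by omega)]
        push_cast [hT1]; ring)
      (by
        intro j hj
        simp only [R4, mem_filter, mem_univ, true_and] at hj
        have hu : uu i1 j < n := (i1 - j).isLt
        rw [valR_lt i1 i1 j (by omega), valR_ge i1 i4 j (by omega)]
        push_cast [hT1]; ring)
  have e23 := F_formula I J i1 i2 i3 ((i2 - i1).val) ((i3 - i1).val) ((i4 - i1).val)
      hc1 hc2 ht4 Hu H1 H2 H3 H4
      (((i2 - i1).val : ℝ) + ((i3 - i1).val : ℝ)) (((i2 - i1).val : ℝ) + ((i3 - i1).val : ℝ)) (((i2 - i1).val : ℝ) + ((i3 - i1).val : ℝ) - (n : ℝ)) (((i2 - i1).val : ℝ) + ((i3 - i1).val : ℝ) - 2 * (n : ℝ))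
      (by
        intro j hj
        simp only [R1, mem_filter, mem_univ, true_and] at hj
        have hu : uu i1 j < n := (i1 - j).isLt
        rw [valR_lt i1 i2 j (by omega), valR_lt i1 i3 j (by omega)]
        push_cast [hT1]; ring)
      (by
        intro j hj
        simp only [R2, mem_filter, mem_univ, true_and] at hj
        have hu : uu i1 j < n := (i1 - j).isLt
        rw [valR_lt i1 i2 j (by omega), valR_lt i1 i3 j (by omega)]
        push_cast [hT1]; ring)
      (by
        intro j hj
        simp only [R3, mem_filter, mem_univ, true_and] at hj
        have hu : uu i1 j < n := (i1 - j).isLt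
        rw [valR_lt i1 i2 j (by omega), valR_ge i1 i3 j (by omega)]
        push_cast [hT1]; ring)
      (by
        intro j hj
        simp only [R4, mem_filter, mem_univ, true_and] at hj
        have hu : uu i1 j < n := (i1 - j).isLt
        rw [valR_ge i1 i2 j (by omega), valR_ge i1 i3 j (by omega)]
        push_cast [hT1]; ring)
  simp only [rho]
  rw [hfun_inf' Hu (ind J + stdE i1 + stdE i3 - ind I),
    hfun_inf' Hu (ind J + stdE i2 + stdE i4 - ind I),
    hfun_inf' Hu (ind J + stdE i1 + stdE i2 - ind I),
    hfun_inf' Hu (ind J + stdE i3 + stdE i4 - ind I),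
    hfun_inf' Hu (ind J + stdE i1 + stdE i4 - ind I),
    hfun_inf' Hu (ind J + stdE i2 + stdE i3 - ind I)]
  rw [e13, e24, e12, e34, e14, e23]
  exact key_identity (n : ℝ) (by exact_mod_cast hn0) _ _ _ _ ⟨mB, hB⟩ ⟨mC, hC⟩ ⟨mD, hD⟩
    ((i2 - i1).val : ℝ) ((i3 - i1).val : ℝ) ((i4 - i1).val : ℝ)
end

section
/- Let 2 ≤ k ≤ n−2. The linear map from the kinematic space K_{k,n} to ℝ^{N}, where N is the set of nonfrozen k-element subsets of {1,…,n}, sending s to the tuple (η_J(s))_{J ∈ N}, is a linear isomorphism. In particular the functionals η_J for nonfrozen J form a basis of the dual space of K_{k,n}, and dim K_{k,n} = binom(n,k) − n. -/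
open Finset

/-- A `k`-subset is frozen if it is a cyclic interval `{i, i+1, …, i+k−1} (mod n)`. -/
def IsFrozenSub (n k : ℕ) (J : Finset (Fin n)) : Prop :=
  ∃ i : Fin n, J = univ.filter fun x => (x - i).val < k

instance (n k : ℕ) (J : Finset (Fin n)) : Decidable (IsFrozenSub n k J) :=
  inferInstanceAs (Decidable (∃ i : Fin n, J = univ.filter fun x => (x - i).val < k))

/-- Index type of coordinates of `ℝ^{binom(n,k)}`: the `k`-element subsets of `{1,…,n}`. -/
abbrev KIdx (n k : ℕ) := {J : Finset (Fin n) // J.card = k}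

/-- The kinematic space `K_{k,n} = {s : ∀ a, Σ_{J ∋ a} s_J = 0} ⊆ ℝ^{binom(n,k)}`. -/
def Kspace (n k : ℕ) : Submodule ℝ (KIdx n k → ℝ) where
  carrier := {s | ∀ a : Fin n, ∑ J ∈ univ.filter (fun J : KIdx n k => a ∈ J.1), s J = 0}
  add_mem' := by
    intro x y hx hy a
    simp only [Pi.add_apply, Finset.sum_add_distrib]
    rw [hx a, hy a, add_zero]
  zero_mem' := by
    intro a
    simp
  smul_mem' := by
    intro r x hx a
    simp only [Pi.smul_apply, smul_eq_mul, ← Finset.mul_sum]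
    rw [hx a, mul_zero]

/-- The planar basis element `η_J(s) = −(1/n)·Σ_I s_I ρ_J(e_I)`. -/
noncomputable def eta (n k : ℕ) (J : Finset (Fin n)) (s : KIdx n k → ℝ) : ℝ :=
  -(1 / (n : ℝ)) * ∑ I : KIdx n k, s I * rho J (ind I.1)

/-!
Write `M(I, J)` for the maximum over `j` of `#{b ∈ J | b < j} - #{a ∈ I | a < j}`. Evaluating the
`L_j` on `e_I - e_J` gives `ρ_J(e_I) = ∑_{a ∈ I} a - ∑_{b ∈ J} b - n M(I, J)`, and every functional
`s ↦ ∑_I (∑_{a ∈ I} c_a) s_I` vanishes on `K_{k,n}`, so there `η_J(s) = ∑_I M(I, J) s_I`.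

For a cyclic interval `J` the maximum is attained at the end of `J`, where `M(·, J)` has exactly
that vanishing form, so `η_J = 0` on `K_{k,n}` for frozen `J`. On the other hand, moving a subset `ε`
of the left ends of the runs of `I` one step to the left gives sets `J_ε` with
`∑_ε (-1)^|ε| M(X, J_ε) = -[X = I] + c_I`: an argmax of the profile propagates along each run, and
this forces `I ⊆ X`. Hence the `η_J` with `J` nonfrozen already separate the points of `K_{k,n}`.
This injection lands in a space of dimension `binom(n,k) - n`, while `K_{k,n}`, cut out by `n`
linear equations, has dimension at least `binom(n,k) - n`.
-/

open Fin.NatCast Fin.CommRing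

lemma Fin.forall_of_imp_sub_one {n : ℕ} [NeZero n] {P : Fin n → Prop} (x : Fin n) (hx : P x)
    (h : ∀ y, P y → P (y - 1)) (y : Fin n) : P y := by
  have hsub : ∀ t : ℕ, P (x - t) := by
    intro t
    induction t with
    | zero => simpa using hx
    | succ t ih => simpa [sub_sub] using h _ ih
  simpa using hsub (x - y).val

lemma Finset.sup'_add_ite_one {ι : Type*} {s : Finset ι} (hs : s.Nonempty) (f : ι → ℤ)
    (p : ι → Prop) [DecidablePred p] :
    s.sup' hs (fun j => f j + if p j then 1 else 0)
      = s.sup' hs f + if ∃ j ∈ s, p j ∧ f j = s.sup' hs f then 1 else 0 := by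
  apply le_antisymm
  · refine Finset.sup'_le _ _ fun j hj => ?_
    have hfj := Finset.le_sup' f hj
    by_cases hpj : p j
    · by_cases hmax : f j = s.sup' hs f
      · rw [if_pos hpj, if_pos ⟨j, hj, hpj, hmax⟩, hmax]
      · split_ifs <;> omega
    · split_ifs <;> omega
  · split_ifs with hex
    · obtain ⟨j, hj, hpj, hmax⟩ := hex
      exact Finset.le_sup'_of_le _ hj (by simp [hpj, hmax])
    · obtain ⟨j, hj, hmax⟩ := Finset.exists_mem_eq_sup' hs f
      exact Finset.le_sup'_of_le _ hj (by split_ifs <;> omega)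

lemma Finset.sum_powerset_neg_one_pow_card_mul_ite_exists {α : Type*} [DecidableEq α]
    {L : Finset α} (hL : L.Nonempty) (p : α → Prop) [∀ ε : Finset α, Decidable (∃ j ∈ ε, p j)]
    [Decidable (∀ l ∈ L, p l)] :
    ∑ ε ∈ L.powerset, (-1 : ℤ) ^ #ε * (if ∃ j ∈ ε, p j then 1 else 0)
      = -(if ∀ l ∈ L, p l then 1 else 0) := by
  classical
  have hsplit : ∀ ε ∈ L.powerset, (-1 : ℤ) ^ #ε * (if ∃ j ∈ ε, p j then 1 else 0)
      = (-1 : ℤ) ^ #ε - if ε ⊆ L.filter (¬ p ·) then (-1 : ℤ) ^ #ε else 0 := by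
    intro ε hε
    have hεL := Finset.mem_powerset.1 hε
    by_cases hex : ∃ j ∈ ε, p j
    · have : ¬ ε ⊆ L.filter (¬ p ·) := fun hsub => by
        obtain ⟨j, hj, hpj⟩ := hex
        exact (Finset.mem_filter.1 (hsub hj)).2 hpj
      simp [hex, this]
    · have : ε ⊆ L.filter (¬ p ·) := fun j hj =>
        Finset.mem_filter.2 ⟨hεL hj, fun hpj => hex ⟨j, hj, hpj⟩⟩
      simp [hex, this]
  have hfilter : L.powerset.filter (· ⊆ L.filter (¬ p ·)) = (L.filter (¬ p ·)).powerset := by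
    ext ε
    simp only [Finset.mem_filter, Finset.mem_powerset, and_iff_right_iff_imp]
    exact fun h => h.trans (Finset.filter_subset _ _)
  rw [Finset.sum_congr rfl hsplit, Finset.sum_sub_distrib,
    Finset.sum_powerset_neg_one_pow_card_of_nonempty hL, ← Finset.sum_filter, hfilter,
    Finset.sum_powerset_neg_one_pow_card]
  by_cases hall : ∀ l ∈ L, p l <;> simp [Finset.filter_eq_empty_iff, hall]

namespace PlanarBasis

variable {n : ℕ}

def countBelow (S : Finset (Fin n)) (m : ℕ) : ℤ := ∑ a ∈ S, if a.val < m then 1 else 0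

lemma countBelow_zero (S : Finset (Fin n)) : countBelow S 0 = 0 := by simp [countBelow]

lemma countBelow_self (S : Finset (Fin n)) : countBelow S n = #S := by simp [countBelow]

lemma countBelow_succ (S : Finset (Fin n)) (j : Fin n) :
    countBelow S (j.val + 1) = countBelow S j.val + if j ∈ S then 1 else 0 := by
  have h : ∀ a : Fin n, (if a.val < j.val + 1 then (1 : ℤ) else 0)
      = (if a.val < j.val then 1 else 0) + if j = a then 1 else 0 := by
    intro a
    simp only [← Fin.val_inj]
    split_ifs <;> omega
  simp only [countBelow, h, Finset.sum_add_distrib, Finset.sum_ite_eq]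

def profile (X Y : Finset (Fin n)) (j : Fin n) : ℤ := countBelow Y j - countBelow X j

def maxProfile [NeZero n] (X Y : Finset (Fin n)) : ℤ :=
  univ.sup' univ_nonempty (profile X Y)

lemma profile_le_maxProfile [NeZero n] (X Y : Finset (Fin n)) (j : Fin n) :
    profile X Y j ≤ maxProfile X Y :=
  Finset.le_sup' _ (mem_univ j)

lemma exists_profile_eq_maxProfile [NeZero n] (X Y : Finset (Fin n)) :
    ∃ j, profile X Y j = maxProfile X Y := by
  obtain ⟨j, -, hj⟩ := Finset.exists_mem_eq_sup' univ_nonempty (profile X Y)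
  exact ⟨j, hj.symm⟩

lemma maxProfile_self [NeZero n] (X : Finset (Fin n)) : maxProfile X X = 0 := by
  have : profile X X = fun _ => 0 := funext fun _ => sub_self _
  simp [maxProfile, this]

lemma profile_add_one [NeZero n] {X Y : Finset (Fin n)} (h : #X = #Y) (j : Fin n) :
    profile X Y (j + 1) = profile X Y j + (if j ∈ Y then 1 else 0) - if j ∈ X then 1 else 0 := by
  obtain ⟨m, rfl⟩ : ∃ m, n = m + 1 := ⟨n - 1, (Nat.succ_pred_eq_of_pos (NeZero.pos n)).symm⟩
  have hX := countBelow_succ X j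
  have hY := countBelow_succ Y j
  rcases eq_or_ne j (Fin.last m) with hj | hj
  · have hjv : j.val + 1 = m + 1 := by simp [hj]
    rw [hjv, countBelow_self] at hX hY
    rw [profile, profile, Fin.val_add_one, if_pos hj, countBelow_zero, countBelow_zero]
    omega
  · rw [profile, profile, Fin.val_add_one, if_neg hj]
    omega

lemma mem_and_profile_add_one_eq_max [NeZero n] {X I : Finset (Fin n)} (h : #X = #I)
    {j : Fin n} (hj : profile X I j = maxProfile X I) (hjI : j ∈ I) :
    j ∈ X ∧ profile X I (j + 1) = maxProfile X I := by
  have hstep := profile_add_one h j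
  have hle := profile_le_maxProfile X I (j + 1)
  rw [if_pos hjI] at hstep
  by_cases hjX : j ∈ X
  · rw [if_pos hjX] at hstep
    exact ⟨hjX, by omega⟩
  · rw [if_neg hjX] at hstep
    omega

def leftEnds [NeZero n] (I : Finset (Fin n)) : Finset (Fin n) := I.filter fun l => l - 1 ∉ I

lemma mem_leftEnds [NeZero n] {I : Finset (Fin n)} {l : Fin n} :
    l ∈ leftEnds I ↔ l ∈ I ∧ l - 1 ∉ I := mem_filter

lemma leftEnds_nonempty [NeZero n] {I : Finset (Fin n)} (hI : I.Nonempty) (hI' : I ≠ univ) :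
    (leftEnds I).Nonempty := by
  by_contra hempty
  obtain ⟨x, hx⟩ := hI
  refine hI' (eq_univ_of_forall (Fin.forall_of_imp_sub_one x hx fun y hy => ?_))
  by_contra hy'
  exact hempty ⟨y, mem_leftEnds.2 ⟨hy, hy'⟩⟩

/-- Inside `I`, a maximiser `j` of `profile X I` lies in `X` and `j + 1` is again a maximiser;
every point of `I` is reached from a left end by such steps, so `I ⊆ X`. -/
lemma eq_of_forall_leftEnds_profile_eq_max [NeZero n] {X I : Finset (Fin n)} (h : #X = #I)
    (hI : I ≠ univ) (hmax : ∀ l ∈ leftEnds I, profile X I l = maxProfile X I) : X = I := by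
  have hmem : ∀ x ∈ I, profile X I x = maxProfile X I := by
    by_contra! hbad
    obtain ⟨x, hxI, hx⟩ := hbad
    refine hI (eq_univ_of_forall fun y =>
      (Fin.forall_of_imp_sub_one (P := fun y => y ∈ I ∧ profile X I y ≠ maxProfile X I)
        x ⟨hxI, hx⟩ (fun y ⟨hyI, hy⟩ => ?_) y).1)
    have hy1 : y - 1 ∈ I := by
      by_contra hy1
      exact hy (hmax y (mem_leftEnds.2 ⟨hyI, hy1⟩))
    refine ⟨hy1, fun hmax' => hy ?_⟩
    simpa using (mem_and_profile_add_one_eq_max h hmax' hy1).2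
  have hsub : I ⊆ X := fun x hx => (mem_and_profile_add_one_eq_max h (hmem x hx) hx).1
  exact (Finset.eq_of_subset_of_card_le hsub h.le).symm

def shiftLeftEnds [NeZero n] (I ε : Finset (Fin n)) : Finset (Fin n) := (I \ ε) ∪ ε.image (· - 1)

section ShiftLeftEnds

variable [NeZero n] {I ε : Finset (Fin n)}

lemma disjoint_sdiff_image_sub_one (hε : ε ⊆ leftEnds I) : Disjoint (I \ ε) (ε.image (· - 1)) := by
  rw [disjoint_right]
  rintro _ hy hy'
  obtain ⟨l, hl, rfl⟩ := mem_image.1 hy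
  exact (mem_leftEnds.1 (hε hl)).2 (mem_sdiff.1 hy').1

lemma card_shiftLeftEnds (hε : ε ⊆ leftEnds I) : #(shiftLeftEnds I ε) = #I := by
  have hεI : ε ⊆ I := hε.trans (filter_subset _ _)
  rw [shiftLeftEnds, card_union_of_disjoint (disjoint_sdiff_image_sub_one hε),
    card_image_of_injective _ (sub_left_injective (b := 1)), card_sdiff_of_subset hεI,
    Nat.sub_add_cancel (card_le_card hεI)]

lemma ite_val_sub_one_lt_sub_ite_val_lt (l j : Fin n) :
    ((if (l - 1).val < j.val then 1 else 0) : ℤ) - (if l.val < j.val then 1 else 0)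
      = (if l = j then 1 else 0) - if l = 0 then 1 else 0 := by
  obtain ⟨m, rfl⟩ : ∃ m, n = m + 1 := ⟨n - 1, (Nat.succ_pred_eq_of_pos (NeZero.pos n)).symm⟩
  have := j.isLt
  rw [Fin.coe_sub_one]
  simp only [Fin.ext_iff, Fin.val_zero]
  split_ifs <;> omega

lemma countBelow_shiftLeftEnds (hε : ε ⊆ leftEnds I) (j : Fin n) :
    countBelow (shiftLeftEnds I ε) j
      = countBelow I j + (if j ∈ ε then 1 else 0) - if (0 : Fin n) ∈ ε then 1 else 0 := by
  have hεI : ε ⊆ I := hε.trans (filter_subset _ _)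
  have hshift : ∑ l ∈ ε, ((if (l - 1).val < j.val then 1 else 0) : ℤ)
      - ∑ l ∈ ε, ((if l.val < j.val then 1 else 0) : ℤ)
      = (if j ∈ ε then 1 else 0) - if (0 : Fin n) ∈ ε then 1 else 0 := by
    rw [← sum_sub_distrib]
    simp only [ite_val_sub_one_lt_sub_ite_val_lt, sum_sub_distrib, sum_ite_eq']
  rw [countBelow, shiftLeftEnds, sum_union (disjoint_sdiff_image_sub_one hε),
    sum_image fun a _ b _ h => sub_left_injective h, countBelow, ← sum_sdiff hεI]
  linear_combination hshift

lemma maxProfile_shiftLeftEnds (hε : ε ⊆ leftEnds I) (X : Finset (Fin n)) :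
    maxProfile X (shiftLeftEnds I ε)
      = maxProfile X I + (if ∃ j ∈ ε, profile X I j = maxProfile X I then 1 else 0)
        - if (0 : Fin n) ∈ ε then 1 else 0 := by
  have hprofile : profile X (shiftLeftEnds I ε) = fun j =>
      (profile X I j + if j ∈ ε then 1 else 0) + -if (0 : Fin n) ∈ ε then 1 else 0 := by
    ext j
    rw [profile, profile, countBelow_shiftLeftEnds hε]
    ring
  rw [maxProfile, hprofile, ← Finset.sup'_add, Finset.sup'_add_ite_one, ← maxProfile]
  simp only [mem_univ, true_and]
  ring

lemma sum_powerset_leftEnds_maxProfile_shiftLeftEnds (hL : (leftEnds I).Nonempty)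
    (X : Finset (Fin n)) :
    ∑ ε ∈ (leftEnds I).powerset, (-1 : ℤ) ^ #ε * maxProfile X (shiftLeftEnds I ε)
      = -(if ∀ l ∈ leftEnds I, profile X I l = maxProfile X I then 1 else 0)
        + if ∀ l ∈ leftEnds I, l = 0 then 1 else 0 := by
  have hexpand : ∀ ε ∈ (leftEnds I).powerset,
      (-1 : ℤ) ^ #ε * maxProfile X (shiftLeftEnds I ε)
        = (-1) ^ #ε * maxProfile X I
          + (-1) ^ #ε * (if ∃ j ∈ ε, profile X I j = maxProfile X I then 1 else 0)
          - (-1) ^ #ε * (if ∃ j ∈ ε, j = 0 then 1 else 0) := by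
    intro ε hε
    rw [maxProfile_shiftLeftEnds (mem_powerset.1 hε)]
    simp only [exists_eq_right]
    ring
  rw [sum_congr rfl hexpand, sum_sub_distrib, sum_add_distrib, ← sum_mul,
    sum_powerset_neg_one_pow_card_of_nonempty hL, zero_mul]
  linear_combination
    sum_powerset_neg_one_pow_card_mul_ite_exists hL (profile X I · = maxProfile X I)
      - sum_powerset_neg_one_pow_card_mul_ite_exists hL (· = (0 : Fin n))

end ShiftLeftEnds

lemma val_sub_eq (a j : Fin n) :
    ((a - j).val : ℤ) = a.val - j.val + n * if a.val < j.val then 1 else 0 := by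
  have := j.isLt
  split_ifs with h
  · rw [Fin.coe_sub_iff_lt.2 h]
    omega
  · rw [Fin.sub_val_of_le (not_lt.1 h)]
    omega

lemma sum_val_sub (S : Finset (Fin n)) (j : Fin n) :
    ∑ a ∈ S, ((a - j).val : ℤ) = ∑ a ∈ S, (a.val : ℤ) - #S * j.val + n * countBelow S j := by
  simp only [val_sub_eq, sum_add_distrib, sum_sub_distrib, sum_const, nsmul_eq_mul, countBelow,
    mul_sum]

lemma Lfun_eq_sum [NeZero n] (j : Fin n) (x : Fin n → ℝ) : Lfun j x = ∑ a, ((a - j).val : ℝ) * x a :=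
  Fintype.sum_equiv (Equiv.addLeft j) _ _ fun r => by simp

lemma Lfun_ind_sub_ind [NeZero n] {I J : Finset (Fin n)} (h : #I = #J) (j : Fin n) :
    Lfun j (ind I - ind J)
      = ((∑ a ∈ I, (a.val : ℤ) - ∑ a ∈ J, (a.val : ℤ) - n * profile I J j : ℤ) : ℝ) := by
  have hsum : ∀ S : Finset (Fin n), ∑ a, ((a - j).val : ℝ) * ind S a
      = ((∑ a ∈ S, ((a - j).val : ℤ) : ℤ) : ℝ) := by
    intro S
    simp [ind, mul_ite, sum_ite_mem]
  rw [Lfun_eq_sum]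
  simp only [Pi.sub_apply, mul_sub, sum_sub_distrib, hsum, sum_val_sub, h, profile]
  push_cast
  ring

lemma hfun_ind_sub_ind [NeZero n] {I J : Finset (Fin n)} (h : #I = #J) :
    hfun (ind I - ind J)
      = ((∑ a ∈ I, (a.val : ℤ) - ∑ a ∈ J, (a.val : ℤ) - n * maxProfile I J : ℤ) : ℝ) := by
  apply le_antisymm
  · obtain ⟨j, hj⟩ := exists_profile_eq_maxProfile I J
    exact csInf_le (Set.finite_range _).bddBelow ⟨j, by dsimp only; rw [Lfun_ind_sub_ind h, hj]⟩
  · refine le_csInf (Set.range_nonempty _) ?_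
    rintro _ ⟨j, rfl⟩
    dsimp only
    rw [Lfun_ind_sub_ind h]
    exact Int.cast_le.2 (by gcongr; exact profile_le_maxProfile I J j)

lemma sum_sum_mul_eq_zero_of_mem_Kspace {k : ℕ} {s : KIdx n k → ℝ} (hs : s ∈ Kspace n k)
    (c : Fin n → ℝ) : ∑ I : KIdx n k, (∑ a ∈ I.1, c a) * s I = 0 := by
  have hs' : ∀ a, ∑ I ∈ univ.filter (fun I : KIdx n k => a ∈ I.1), s I = 0 := hs
  calc ∑ I : KIdx n k, (∑ a ∈ I.1, c a) * s I
      = ∑ a, c a * ∑ I ∈ univ.filter (fun I : KIdx n k => a ∈ I.1), s I := by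
        simp only [sum_mul, mul_sum]
        exact sum_comm' fun I a => by simp
    _ = 0 := by simp [hs']

lemma sum_eq_zero_of_mem_Kspace {k : ℕ} (hk : k ≠ 0) {s : KIdx n k → ℝ} (hs : s ∈ Kspace n k) :
    ∑ I : KIdx n k, s I = 0 := by
  have h := sum_sum_mul_eq_zero_of_mem_Kspace hs 1
  simp only [Pi.one_apply, sum_const, nsmul_eq_mul, mul_one] at h
  rw [sum_congr rfl fun I _ => by rw [I.2], ← mul_sum] at h
  exact (mul_eq_zero.1 h).resolve_left (Nat.cast_ne_zero.2 hk)

lemma eta_eq_sum_maxProfile [NeZero n] {k : ℕ} (hk : k ≠ 0) {s : KIdx n k → ℝ}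
    (hs : s ∈ Kspace n k) {J : Finset (Fin n)} (hJ : #J = k) :
    eta n k J s = ∑ I : KIdx n k, (maxProfile I.1 J : ℝ) * s I := by
  have hterm : ∀ I : KIdx n k, s I * rho J (ind I.1)
      = (∑ a ∈ I.1, (a.val : ℝ)) * s I - (∑ a ∈ J, (a.val : ℝ)) * s I
        - n * ((maxProfile I.1 J : ℝ) * s I) := by
    intro I
    rw [rho, hfun_ind_sub_ind (I.2.trans hJ.symm)]
    push_cast
    ring
  have hn : (n : ℝ) ≠ 0 := Nat.cast_ne_zero.2 (NeZero.ne n)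
  rw [eta, sum_congr rfl fun I _ => hterm I, sum_sub_distrib, sum_sub_distrib,
    sum_sum_mul_eq_zero_of_mem_Kspace hs, ← mul_sum, ← mul_sum, sum_eq_zero_of_mem_Kspace hk hs]
  field_simp
  ring

def cyclicInterval (i : Fin n) (k : ℕ) : Finset (Fin n) := univ.filter fun y => (y - i).val < k

lemma isFrozenSub_iff {k : ℕ} {J : Finset (Fin n)} :
    IsFrozenSub n k J ↔ ∃ i, J = cyclicInterval i k := Iff.rfl

section CyclicInterval

variable [NeZero n] {k : ℕ}

lemma card_cyclicInterval (hkn : k ≤ n) (i : Fin n) : #(cyclicInterval i k) = k := by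
  rw [cyclicInterval, card_equiv (Equiv.subRight i) (t := univ.filter fun y : Fin n => y.val < k)
    (by simp), Fin.card_filter_val_lt, min_eq_right hkn]

lemma add_natCast_mem_cyclicInterval_iff (i : Fin n) {t : ℕ} (ht : t < n) :
    i + (t : Fin n) ∈ cyclicInterval i k ↔ t < k := by
  simp [cyclicInterval, Fin.val_natCast, Nat.mod_eq_of_lt ht]

lemma cyclicInterval_injective (hk : k ≠ 0) (hkn : k < n) :
    Function.Injective (cyclicInterval (n := n) · k) := by
  obtain ⟨m, rfl⟩ : ∃ m, n = m + 1 := ⟨n - 1, (Nat.succ_pred_eq_of_pos (NeZero.pos n)).symm⟩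
  intro i i' h
  simp only at h
  have hi : i ∈ cyclicInterval i' k := by
    rw [← h]
    simp [cyclicInterval, Nat.pos_of_ne_zero hk]
  have hi1 : i - 1 ∉ cyclicInterval i' k := by
    rw [← h]
    simp only [cyclicInterval, mem_filter, mem_univ, sub_sub_cancel_left, Fin.coe_neg_one,
      true_and, not_lt]
    omega
  simp only [cyclicInterval, mem_filter, mem_univ, true_and] at hi hi1
  by_contra hne
  rw [sub_right_comm, Fin.coe_sub_one, if_neg (sub_ne_zero.2 hne)] at hi1
  omega

/-- The profile against a cyclic interval increases along the interval and decreases off it. -/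
lemma maxProfile_cyclicInterval (hkn : k ≤ n) {X : Finset (Fin n)} (hX : #X = k) (i : Fin n) :
    maxProfile X (cyclicInterval i k) = profile X (cyclicInterval i k) (i + k) := by
  set D : ℕ → ℤ := fun t => profile X (cyclicInterval i k) (i + t)
  have hstep : ∀ t, D (t + 1) = D t + (if i + t ∈ cyclicInterval i k then 1 else 0)
      - if (i + t : Fin n) ∈ X then 1 else 0 := fun t => by
    simp only [D, Nat.cast_succ, ← add_assoc]
    exact profile_add_one (hX.trans (card_cyclicInterval hkn i).symm) _
  have hup : MonotoneOn D (Set.Icc 0 k) :=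
    monotoneOn_of_le_add_one Set.ordConnected_Icc fun t _ _ ht => by
      rw [hstep, if_pos ((add_natCast_mem_cyclicInterval_iff i (by grind)).2 (by grind))]
      split_ifs <;> omega
  have hdown : AntitoneOn D (Set.Icc k n) :=
    antitoneOn_of_add_one_le Set.ordConnected_Icc fun t _ ht ht1 => by
      rw [hstep, if_neg (by rw [add_natCast_mem_cyclicInterval_iff i (by grind)]; grind)]
      split_ifs <;> omega
  refine le_antisymm (Finset.sup'_le _ _ fun j _ => ?_) (profile_le_maxProfile _ _ _)
  obtain ⟨t, ht, rfl⟩ : ∃ t < n, j = i + (t : Fin n) := ⟨(j - i).val, (j - i).isLt, by simp⟩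
  rcases le_total t k with htk | htk
  · exact hup ⟨t.zero_le, htk⟩ ⟨k.zero_le, le_rfl⟩ htk
  · exact hdown ⟨le_rfl, hkn⟩ ⟨htk, ht.le⟩ htk

lemma sum_maxProfile_cyclicInterval_mul_eq_zero (hk : k ≠ 0) (hkn : k ≤ n)
    {s : KIdx n k → ℝ} (hs : s ∈ Kspace n k) (i : Fin n) :
    ∑ I : KIdx n k, (maxProfile I.1 (cyclicInterval i k) : ℝ) * s I = 0 := by
  have hterm : ∀ I : KIdx n k, (maxProfile I.1 (cyclicInterval i k) : ℝ) * s I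
      = countBelow (cyclicInterval i k) (i + k : Fin n) * s I
        - (∑ a ∈ I.1, if a.val < (i + k : Fin n).val then (1 : ℝ) else 0) * s I := by
    intro I
    rw [maxProfile_cyclicInterval hkn I.2, profile, countBelow, countBelow]
    push_cast
    ring
  rw [sum_congr rfl fun I _ => hterm I, sum_sub_distrib, ← mul_sum,
    sum_eq_zero_of_mem_Kspace hk hs, sum_sum_mul_eq_zero_of_mem_Kspace hs, mul_zero, sub_zero]

end CyclicInterval

lemma sum_powerset_leftEnds_maxProfile_shiftLeftEnds_eq_ite [NeZero n] {X I : Finset (Fin n)}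
    (hXI : #X = #I) (hI : I.Nonempty) (hI' : I ≠ univ) :
    ∑ ε ∈ (leftEnds I).powerset, (-1 : ℤ) ^ #ε * maxProfile X (shiftLeftEnds I ε)
      = -(if X = I then 1 else 0) + if ∀ l ∈ leftEnds I, l = 0 then 1 else 0 := by
  rw [sum_powerset_leftEnds_maxProfile_shiftLeftEnds (leftEnds_nonempty hI hI')]
  congr 2
  refine if_congr ⟨eq_of_forall_leftEnds_profile_eq_max hXI hI', ?_⟩ rfl rfl
  rintro rfl l -
  rw [maxProfile_self, profile, sub_self]

/-- An alternating sum of these functionals over the shifts of the left ends of `I` is `-s I`. -/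
lemma eq_zero_of_forall_sum_maxProfile_mul_eq_zero [NeZero n] {k : ℕ} (hk : k ≠ 0) (hkn : k < n)
    {s : KIdx n k → ℝ} (hs : s ∈ Kspace n k)
    (h : ∀ J : KIdx n k, ∑ I : KIdx n k, (maxProfile I.1 J.1 : ℝ) * s I = 0) : s = 0 := by
  funext I
  have hI : I.1.Nonempty := card_pos.1 (by rw [I.2]; omega)
  have hI' : I.1 ≠ univ := fun hu => by
    have := I.2
    simp only [hu, card_univ, Fintype.card_fin] at this
    omega
  set c : ℝ := if ∀ l ∈ leftEnds I.1, l = 0 then 1 else 0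
  have hshift : ∀ ε ∈ (leftEnds I.1).powerset, #(shiftLeftEnds I.1 ε) = k := fun ε hε =>
    (card_shiftLeftEnds (mem_powerset.1 hε)).trans I.2
  have hcoeff : ∀ I' : KIdx n k, ∑ ε ∈ (leftEnds I.1).powerset,
      (-1 : ℝ) ^ #ε * maxProfile I'.1 (shiftLeftEnds I.1 ε) = -(if I' = I then 1 else 0) + c := by
    intro I'
    have := congrArg (Int.cast : ℤ → ℝ)
      (sum_powerset_leftEnds_maxProfile_shiftLeftEnds_eq_ite (I'.2.trans I.2.symm) hI hI')
    push_cast at this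
    simpa only [← Subtype.ext_iff] using this
  calc s I = -∑ I' : KIdx n k, (-(if I' = I then 1 else 0) + c) * s I' := by
        rw [sum_congr rfl fun I' _ => add_mul _ _ _, sum_add_distrib, ← mul_sum,
          sum_eq_zero_of_mem_Kspace hk hs]
        simp
    _ = -∑ ε ∈ (leftEnds I.1).powerset, (-1 : ℝ) ^ #ε
          * ∑ I' : KIdx n k, (maxProfile I'.1 (shiftLeftEnds I.1 ε) : ℝ) * s I' := by
        simp only [← hcoeff, sum_mul, mul_sum, mul_assoc]
        rw [sum_comm]
    _ = 0 := by
        rw [sum_eq_zero fun ε hε => by rw [h ⟨_, hshift ε hε⟩, mul_zero], neg_zero]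

def incidenceMap (n k : ℕ) : (KIdx n k → ℝ) →ₗ[ℝ] (Fin n → ℝ) :=
  LinearMap.pi fun a => ∑ J ∈ univ.filter (fun J : KIdx n k => a ∈ J.1), LinearMap.proj J

lemma Kspace_eq_ker_incidenceMap (n k : ℕ) : Kspace n k = LinearMap.ker (incidenceMap n k) := by
  ext s
  simp only [incidenceMap, LinearMap.mem_ker, funext_iff, LinearMap.pi_apply, LinearMap.coe_sum,
    LinearMap.coe_proj, Finset.sum_apply, Function.eval, Pi.zero_apply]
  rfl

lemma choose_sub_le_finrank_Kspace (n k : ℕ) : n.choose k - n ≤ Module.finrank ℝ (Kspace n k) := by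
  have hrank := LinearMap.finrank_range_add_finrank_ker (incidenceMap n k)
  have hrange := (LinearMap.range (incidenceMap n k)).finrank_le
  rw [Module.finrank_fintype_fun_eq_card, Fintype.card_finset_len, Fintype.card_fin] at hrank
  rw [Module.finrank_fintype_fun_eq_card, Fintype.card_fin] at hrange
  rw [Kspace_eq_ker_incidenceMap]
  omega

lemma card_nonfrozen [NeZero n] {k : ℕ} (hk : k ≠ 0) (hkn : k < n) :
    Fintype.card {J : Finset (Fin n) // #J = k ∧ ¬ IsFrozenSub n k J} = n.choose k - n := by
  have hfrozen : univ.filter (fun J : Finset (Fin n) => #J = k ∧ ¬ IsFrozenSub n k J)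
      = powersetCard k univ \ univ.image (cyclicInterval · k) := by
    ext J
    simp [isFrozenSub_iff, eq_comm]
  have hsub : univ.image (cyclicInterval · k) ⊆ powersetCard k (univ : Finset (Fin n)) := by
    simp [subset_iff, card_cyclicInterval hkn.le]
  rw [Fintype.card_subtype, hfrozen, card_sdiff_of_subset hsub, card_powersetCard,
    card_image_of_injective _ (cyclicInterval_injective hk hkn), card_univ,
    Fintype.card_fin]

noncomputable def etaMap (n k : ℕ) :
    (KIdx n k → ℝ) →ₗ[ℝ] ({J : Finset (Fin n) // #J = k ∧ ¬ IsFrozenSub n k J} → ℝ) where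
  toFun s J := eta n k J.1 s
  map_add' x y := by
    ext J
    simp only [eta, Pi.add_apply, add_mul, sum_add_distrib]
    ring
  map_smul' c x := by
    ext J
    simp only [eta, Pi.smul_apply, smul_eq_mul, RingHom.id_apply, mul_assoc, ← mul_sum]
    ring

lemma injective_etaMap_domRestrict [NeZero n] {k : ℕ} (hk : k ≠ 0) (hkn : k < n) :
    Function.Injective ((etaMap n k).domRestrict (Kspace n k)) := by
  refine (injective_iff_map_eq_zero _).2 fun s hs => Subtype.ext ?_
  refine eq_zero_of_forall_sum_maxProfile_mul_eq_zero hk hkn s.2 fun J => ?_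
  by_cases hfrozen : IsFrozenSub n k J.1
  · obtain ⟨i, hi⟩ := isFrozenSub_iff.1 hfrozen
    rw [hi]
    exact sum_maxProfile_cyclicInterval_mul_eq_zero hk hkn.le s.2 i
  · rw [← eta_eq_sum_maxProfile hk s.2 J.2]
    exact congrFun hs ⟨J.1, J.2, hfrozen⟩

end PlanarBasis

/-- the linear map `K_{k,n} → ℝ^N`, `s ↦ (η_J(s))_{J nonfrozen}`, is a
linear isomorphism; in particular `dim K_{k,n} = binom(n,k) − n`. -/
theorem stmt7 {n k : ℕ} (hk : 2 ≤ k) (hkn : k ≤ n - 2) :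
    (∃ e : Kspace n k ≃ₗ[ℝ]
        ({J : Finset (Fin n) // J.card = k ∧ ¬ IsFrozenSub n k J} → ℝ),
      ∀ (s : Kspace n k) (J : {J : Finset (Fin n) // J.card = k ∧ ¬ IsFrozenSub n k J}),
        e s J = eta n k J.1 s.1) ∧
    Module.finrank ℝ (Kspace n k) = n.choose k - n := by
  have : NeZero n := ⟨by omega⟩
  have hinj := PlanarBasis.injective_etaMap_domRestrict (n := n) (k := k) (by omega) (by omega)
  have hcard : Module.finrank ℝ ({J : Finset (Fin n) // J.card = k ∧ ¬ IsFrozenSub n k J} → ℝ)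
      = n.choose k - n := by
    rw [Module.finrank_fintype_fun_eq_card, PlanarBasis.card_nonfrozen (by omega) (by omega)]
  have hdim : Module.finrank ℝ (Kspace n k) = n.choose k - n :=
    le_antisymm (hcard ▸ LinearMap.finrank_le_finrank_of_injective hinj)
      (PlanarBasis.choose_sub_le_finrank_Kspace n k)
  exact ⟨⟨LinearMap.linearEquivOfInjective _ hinj (hdim.trans hcard.symm), fun _ _ => rfl⟩, hdim⟩
end

section
/- Let 3 ≤ k ≤ n−2. If x ∈ 𝔅^{(∅)} satisfies ∂_j(x) = 0 for every j ∈ {1,…,n}, then x = 0. Equivalently: if c assigns a real number c_J to every nonfrozen k-element subset J of {1,…,n}, and for every j ∈ {1,…,n} and every (k−1)-element subset K of {1,…,n}∖{j} that is nonfrozen in {1,…,n}∖{j} one has Σ c_J = 0, the sum over all nonfrozen k-element subsets J with ∂_j(J) = K, then c_J = 0 for all J. -/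
open Finset

/-- Cyclic predecessor in `Fin n`. -/
def cpred {n : ℕ} (x : Fin n) : Fin n :=
  ⟨(x.val + (n - 1)) % n, Nat.mod_lt _ (Nat.lt_of_le_of_lt (Nat.zero_le _) x.isLt)⟩

/-- The cyclic interval `[i, j]` in `Fin n`. -/
def cInterval {n : ℕ} (i j : Fin n) : Finset (Fin n) :=
  univ.filter fun x => (x - i).val ≤ (j - i).val

/-- `K` is frozen in `S` if its elements are consecutive in the cyclic order induced
on `S` from `(1,2,…,n)`, i.e. `K` is the intersection of `S` with a cyclic interval. -/
def FrozenIn {n : ℕ} (S K : Finset (Fin n)) : Prop :=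
  ∃ i j : Fin n, K = S ∩ cInterval i j

instance {n : ℕ} (S K : Finset (Fin n)) : Decidable (FrozenIn S K) :=
  inferInstanceAs (Decidable (∃ i j : Fin n, K = S ∩ cInterval i j))

/-- The first element of `K` met when reading `j, j+1, j+2, …` cyclically
(`j` itself if `j ∈ K`); junk value `j` if `K = ∅`. -/
def nextIn {n : ℕ} (K : Finset (Fin n)) (j : Fin n) : Fin n :=
  if h : (univ.filter fun r : Fin n => j + r ∈ K).Nonempty then
    j + (univ.filter fun r : Fin n => j + r ∈ K).min' h
  else j

/-- The cyclic predecessor of `x` in `S`: the first element of `S` met when reading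
`x−1, x−2, …` cyclically; junk value `x` if `S = ∅`. -/
def prevIn {n : ℕ} (S : Finset (Fin n)) (x : Fin n) : Fin n :=
  if h : (univ.filter fun r : Fin n => cpred x - r ∈ S).Nonempty then
    cpred x - (univ.filter fun r : Fin n => cpred x - r ∈ S).min' h
  else x

/-- `∂_j(K) = K ∖ {ℓ}`, where `ℓ = j` if `j ∈ K` and otherwise `ℓ` is the first
element of `K` met when reading `j+1, j+2, …` cyclically. -/
def bdSet {n : ℕ} (j : Fin n) (K : Finset (Fin n)) : Finset (Fin n) :=
  K.erase (nextIn K j)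

/-- The basis vector `β^{(L)}_K` of the space `𝔅^{(L)}` of formal linear
combinations (modelled inside `ℝ^{Finset (Fin n)}`): the indicator of `K` if `K`
is nonfrozen in `S = {1,…,n} ∖ L`, and `0` if `K` is frozen. -/
noncomputable def betaV {n : ℕ} (L K : Finset (Fin n)) : Finset (Fin n) → ℝ :=
  if FrozenIn ((univ : Finset (Fin n)) \ L) K then 0 else Pi.single K 1

/-- The `S`-initial points of `K`: elements of `K` whose cyclic predecessor in `S`
does not lie in `K`. -/
def initPts {n : ℕ} (S K : Finset (Fin n)) : Finset (Fin n) :=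
  K.filter fun i => prevIn S i ∉ K

/-- `𝓛^{(L)}_K = Σ_{M ∈ {0,1}^t} (−1)^{1+|M|} β^{(L)}_{K_M}`, where `K_M` replaces the
chosen `S`-initial points of `K` by their cyclic predecessors in `S = {1,…,n} ∖ L`. -/
noncomputable def LElt {n : ℕ} (L K : Finset (Fin n)) : Finset (Fin n) → ℝ :=
  ∑ T ∈ (initPts ((univ : Finset (Fin n)) \ L) K).powerset,
    ((-1 : ℝ) ^ (1 + T.card)) •
      betaV L ((K \ T) ∪ T.image (prevIn ((univ : Finset (Fin n)) \ L)))

/-- The boundary map `∂_j : 𝔅^{(L)} → 𝔅^{(L∪{j})}`, the linear extension of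
`β^{(L)}_K ↦ β^{(L∪{j})}_{∂_j(K)}`. -/
noncomputable def bdMap {n : ℕ} (L : Finset (Fin n)) (j : Fin n)
    (x : Finset (Fin n) → ℝ) : Finset (Fin n) → ℝ :=
  ∑ K : Finset (Fin n), x K • betaV (insert j L) (bdSet j K)

/-- Iterated boundary maps: `bdComp L [j₁, …, jd] x` applies `∂_{j₁}` first (starting
from `𝔅^{(L)}`), then `∂_{j₂}`, etc. -/
noncomputable def bdComp {n : ℕ} :
    Finset (Fin n) → List (Fin n) → (Finset (Fin n) → ℝ) → (Finset (Fin n) → ℝ)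
  | _, [], x => x
  | L0, j :: js, x => bdComp (insert j L0) js (bdMap L0 j x)

/-!
Fix a nonfrozen `k`-set `J`, an element `j ∈ J`, and put `K = J ∖ {j}`. A set `J'` with
`∂_j J' = K` is either `K ∪ {j}` or avoids `j`, and then `∂_j J' = ∂_{j+1} J'`, because reading
cyclically from `j` or from `j + 1` meets the same first element of `J'`. So the relation at
`(j, K)` reads `c_J + Σ_{∂_{j+1} J' = K} c_{J'} = 0`. If some `j ∈ J` has `j + 1 ∈ J`, choose it:
then `j + 1 ∈ K`, while `∂_{j+1} J'` never contains `j + 1`, so the sum is empty. Otherwise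
`j + 1 ∉ K`, and the sum is the relation at `(j + 1, K)`, which vanishes.

That these relations are available, i.e. that `K` is nonfrozen in `{1,…,n} ∖ {j}` (resp.
`∖ {j + 1}`), is checked by counting *exits* `x ∈ S` with `x + 1 ∉ S`: a nonempty set is a
cyclic interval iff it has at most one exit.
-/

open Fin.CommRing

namespace Fin

variable {n : ℕ} [NeZero n]

lemma add_one_ne_self (hn : 2 ≤ n) (a : Fin n) : a + 1 ≠ a := by
  have : (1 : Fin n) ≠ 0 := by
    rw [Ne, Fin.ext_iff, val_one', val_zero, Nat.mod_eq_of_lt hn]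
    omega
  simpa using this

lemma val_neg_one_eq : (-1 : Fin n).val = n - 1 := by
  rw [Fin.val_neg', val_one']
  rcases Nat.lt_or_ge 1 n with h | h
  · rw [Nat.mod_eq_of_lt h, Nat.mod_eq_of_lt (by omega)]
  · obtain rfl : n = 1 := by have := NeZero.ne n; omega
    simp

lemma val_sub_add_one_of_ne {x a : Fin n} (h : x ≠ a) :
    (x - (a + 1)).val = (x - a).val - 1 := by
  rw [sub_add_eq_sub_sub]
  exact val_sub_one_of_ne_zero (sub_ne_zero.mpr h)

end Fin

section CyclicInterval

variable {n : ℕ}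

lemma mem_cInterval {i j x : Fin n} : x ∈ cInterval i j ↔ (x - i).val ≤ (j - i).val := by
  simp [cInterval]

lemma mem_cInterval_iff_right {i j x : Fin n} :
    x ∈ cInterval i j ↔ (j - x).val ≤ (j - i).val := by
  rw [mem_cInterval]
  fin_omega

lemma frozenIn_univ_iff {S : Finset (Fin n)} :
    FrozenIn univ S ↔ ∃ i j : Fin n, S = cInterval i j := by
  simp only [FrozenIn, univ_inter]

lemma not_frozenIn_erase {K : Finset (Fin n)} {j : Fin n}
    (hK : ¬ FrozenIn univ K) (hjK : ¬ FrozenIn univ (insert j K)) :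
    ¬ FrozenIn (univ.erase j) K := by
  rintro ⟨i, i', hK'⟩
  have hK_eq : K = (cInterval i i').erase j := by
    rw [hK', ← filter_ne', filter_inter, univ_inter, filter_ne']
  by_cases hji : j ∈ cInterval i i'
  · exact hjK (frozenIn_univ_iff.mpr ⟨i, i', by rw [hK_eq, insert_erase hji]⟩)
  · exact hK (frozenIn_univ_iff.mpr ⟨i, i', by rw [hK_eq, erase_eq_of_notMem hji]⟩)

variable [NeZero n]

def exits (S : Finset (Fin n)) : Finset (Fin n) :=
  S.filter fun x => x + 1 ∉ S

lemma mem_exits {S : Finset (Fin n)} {x : Fin n} : x ∈ exits S ↔ x ∈ S ∧ x + 1 ∉ S :=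
  mem_filter

lemma exits_subset_exits_erase {S : Finset (Fin n)} {j : Fin n} (h : j + 1 ∈ S) :
    exits S ⊆ exits (S.erase j) := by
  intro x hx
  rw [mem_exits] at hx ⊢
  refine ⟨mem_erase.mpr ⟨?_, hx.1⟩, fun hx' => hx.2 (mem_of_mem_erase hx')⟩
  rintro rfl
  exact hx.2 h

lemma eq_of_mem_exits_cInterval {i j x : Fin n} (hx : x ∈ exits (cInterval i j)) : x = j := by
  rw [mem_exits, mem_cInterval_iff_right, mem_cInterval_iff_right] at hx
  by_contra hxj
  rw [Fin.val_sub_add_one_of_ne (Ne.symm hxj)] at hx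
  omega

lemma card_exits_cInterval_le_one (i j : Fin n) : #(exits (cInterval i j)) ≤ 1 :=
  card_le_one.mpr fun _ hx _ hy =>
    (eq_of_mem_exits_cInterval hx).trans (eq_of_mem_exits_cInterval hy).symm

lemma cInterval_subset_of_exits_subset {S : Finset (Fin n)} {x e : Fin n} (hx : x ∈ S)
    (h : exits S ⊆ {e}) : cInterval x e ⊆ S := by
  suffices ∀ m : ℕ, ∀ y : Fin n, (y - x).val = m → m ≤ (e - x).val → y ∈ S from
    fun y hy => this _ y rfl (mem_cInterval.mp hy)
  intro m
  induction m with
  | zero =>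
    intro y hy _
    rwa [sub_eq_zero.mp (Fin.ext hy)]
  | succ m ih =>
    intro y hy hm
    have hyx : y ≠ x := by
      rintro rfl
      simp at hy
    have hprev : (y - 1 - x).val = m := by
      rw [sub_right_comm, Fin.val_sub_one_of_ne_zero (sub_ne_zero.mpr hyx), hy]
      rfl
    have hprev_ne : y - 1 ≠ e := by
      rintro rfl
      omega
    by_contra hy'
    refine hprev_ne (mem_singleton.mp (h (mem_exits.mpr ⟨ih _ hprev (by omega), ?_⟩)))
    rwa [sub_add_cancel]

lemma exists_eq_cInterval_of_exits_subset {S : Finset (Fin n)} {e : Fin n} (hS : S.Nonempty)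
    (h : exits S ⊆ {e}) : ∃ i, S = cInterval i e := by
  obtain ⟨x, hx, hmax⟩ := S.exists_max_image (fun y => (e - y).val) hS
  refine ⟨x, subset_antisymm (fun y hy => ?_) (cInterval_subset_of_exits_subset hx h)⟩
  rw [mem_cInterval_iff_right]
  exact hmax y hy

lemma not_frozenIn_univ_of_two_le_card_exits {S : Finset (Fin n)} (h : 2 ≤ #(exits S)) :
    ¬ FrozenIn univ S := by
  rintro ⟨i, j, hS⟩
  rw [univ_inter] at hS
  have := card_exits_cInterval_le_one i j
  rw [← hS] at this
  omega

lemma two_le_card_exits_of_not_frozenIn_univ {S : Finset (Fin n)} (hS : S.Nonempty)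
    (h : ¬ FrozenIn univ S) : 2 ≤ #(exits S) := by
  by_contra! h2
  obtain ⟨e, he⟩ := card_le_one_iff_subset_singleton.mp (Nat.le_of_lt_succ h2)
  obtain ⟨i, hi⟩ := exists_eq_cInterval_of_exits_subset hS he
  exact h (frozenIn_univ_iff.mpr ⟨i, e, hi⟩)

end CyclicInterval

section Boundary

variable {n : ℕ} {j x y : Fin n} {J K : Finset (Fin n)}

lemma bdSet_subset : bdSet j J ⊆ J :=
  erase_subset _ _

variable [NeZero n]

lemma nextIn_spec (hx : x ∈ K) : nextIn K j ∈ K ∧ ∀ y ∈ K, nextIn K j - j ≤ y - j := by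
  have hne : (univ.filter fun r : Fin n => j + r ∈ K).Nonempty :=
    ⟨x - j, by simpa [add_sub_cancel] using hx⟩
  rw [nextIn, dif_pos hne, add_sub_cancel_left]
  refine ⟨by simpa using min'_mem _ hne, fun y hy => min'_le _ _ ?_⟩
  simpa using hy

lemma nextIn_eq_of_forall_sub_le (hy : y ∈ K) (h : ∀ x ∈ K, y - j ≤ x - j) : nextIn K j = y := by
  obtain ⟨hmem, hle⟩ := nextIn_spec (j := j) hy
  exact sub_left_inj.mp (le_antisymm (hle y hy) (h _ hmem))

lemma nextIn_of_mem (hj : j ∈ K) : nextIn K j = j :=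
  nextIn_eq_of_forall_sub_le hj fun _ _ => by
    rw [sub_self]
    exact Fin.zero_le _

lemma nextIn_add_one (hj : j ∉ K) (hK : K.Nonempty) : nextIn K (j + 1) = nextIn K j := by
  obtain ⟨x, hx⟩ := hK
  obtain ⟨hmem, hle⟩ := nextIn_spec (j := j) hx
  refine nextIn_eq_of_forall_sub_le hmem fun y hy => ?_
  rw [Fin.le_def, Fin.val_sub_add_one_of_ne (ne_of_mem_of_not_mem hmem hj),
    Fin.val_sub_add_one_of_ne (ne_of_mem_of_not_mem hy hj)]
  exact Nat.sub_le_sub_right (hle y hy) 1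

/-- Reading from `j + 1`, the element `j` is met last. -/
lemma eq_of_nextIn_add_one_eq_self (h : nextIn J (j + 1) = j) (hx : x ∈ J) : x = j := by
  by_contra hxj
  have hle := (nextIn_spec (j := j + 1) hx).2 x hx
  rw [h, sub_add_cancel_left, Fin.le_def, Fin.val_neg_one_eq,
    Fin.val_sub_add_one_of_ne hxj] at hle
  have := (x - j).isLt
  omega

lemma bdSet_of_mem (hj : j ∈ J) : bdSet j J = J.erase j := by
  rw [bdSet, nextIn_of_mem hj]

lemma notMem_bdSet_self : j ∉ bdSet j J := by
  by_cases hj : j ∈ J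
  · rw [bdSet_of_mem hj]
    exact notMem_erase j J
  · exact fun h => hj (bdSet_subset h)

lemma bdSet_add_one_of_notMem (hj : j ∉ J) (hJ : J.Nonempty) : bdSet (j + 1) J = bdSet j J := by
  rw [bdSet, bdSet, nextIn_add_one hj hJ]

lemma bdSet_add_one_ne_of_mem (hjJ : j ∈ J) (hj : j ∉ K) (hK : K.Nonempty) :
    bdSet (j + 1) J ≠ K := by
  intro h
  have hnext : nextIn J (j + 1) = j := by
    by_contra hne
    exact hj (h ▸ mem_erase.mpr ⟨Ne.symm hne, hjJ⟩)
  obtain ⟨x, hx⟩ := hK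
  have hxJ : x ∈ J := bdSet_subset (h ▸ hx)
  exact hj (eq_of_nextIn_add_one_eq_self hnext hxJ ▸ hx)

lemma bdSet_eq_iff (hj : j ∉ K) (hK : K.Nonempty) :
    bdSet j J = K ↔ J = insert j K ∨ bdSet (j + 1) J = K := by
  have hJ (i : Fin n) (h : bdSet i J = K) : J.Nonempty := hK.mono (h ▸ bdSet_subset)
  constructor
  · intro h
    by_cases hjJ : j ∈ J
    · rw [bdSet_of_mem hjJ] at h
      exact Or.inl (by rw [← h, insert_erase hjJ])
    · exact Or.inr (by rw [bdSet_add_one_of_notMem hjJ (hJ j h), h])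
  · rintro (rfl | h)
    · rw [bdSet_of_mem (mem_insert_self j K), erase_insert hj]
    · by_cases hjJ : j ∈ J
      · exact absurd h (bdSet_add_one_ne_of_mem hjJ hj hK)
      · rwa [← bdSet_add_one_of_notMem hjJ (hJ _ h)]

lemma sum_filter_bdSet_eq {M : Type*} [AddCommMonoid M] (s : Finset (Finset (Fin n)))
    (f : Finset (Fin n) → M) (hj : j ∉ K) (hK : K.Nonempty) (hs : insert j K ∈ s) :
    ∑ J ∈ s.filter (bdSet j · = K), f J =
      f (insert j K) + ∑ J ∈ s.filter (bdSet (j + 1) · = K), f J := by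
  have hfiber :
      s.filter (bdSet j · = K) = insert (insert j K) (s.filter (bdSet (j + 1) · = K)) := by
    ext J
    simp only [mem_filter, mem_insert, bdSet_eq_iff hj hK]
    constructor
    · rintro ⟨hJs, rfl | h⟩
      exacts [Or.inl rfl, Or.inr ⟨hJs, h⟩]
    · rintro (rfl | ⟨hJs, h⟩)
      exacts [⟨hs, Or.inl rfl⟩, ⟨hJs, Or.inr h⟩]
  have hnotMem : insert j K ∉ s.filter (bdSet (j + 1) · = K) := fun h =>
    bdSet_add_one_ne_of_mem (mem_insert_self j K) hj hK (mem_filter.mp h).2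
  rw [hfiber, sum_insert hnotMem]

end Boundary

section Cycle

variable {n k : ℕ} {c : Finset (Fin n) → ℝ} {J : Finset (Fin n)} {j : Fin n}

/-- For each `j` and each nonfrozen `K`, the coefficient of `β^{({j})}_K` in `∂_j c` vanishes. -/
def IsBdCycle (k : ℕ) (c : Finset (Fin n) → ℝ) : Prop :=
  ∀ j : Fin n, ∀ K : Finset (Fin n),
    K ⊆ univ.erase j → K.card = k - 1 → ¬ FrozenIn (univ.erase j) K →
    ∑ J ∈ (powersetCard k (univ : Finset (Fin n))).filter
        (fun J => ¬ FrozenIn univ J ∧ bdSet j J = K), c J = 0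

variable [NeZero n]

lemma IsBdCycle.add_sum_eq_zero (hc : IsBdCycle k c) (hJ : #J = k) (hJnf : ¬ FrozenIn univ J)
    (hj : j ∈ J) (hK : (J.erase j).Nonempty) (hKnf : ¬ FrozenIn (univ.erase j) (J.erase j)) :
    c J + ∑ J' ∈ (powersetCard k univ).filter
        (fun J' => ¬ FrozenIn univ J' ∧ bdSet (j + 1) J' = J.erase j), c J' = 0 := by
  have hsum := sum_filter_bdSet_eq ((powersetCard k univ).filter fun J' => ¬ FrozenIn univ J') c
    (notMem_erase j J) hK
    (by rwa [insert_erase hj, mem_filter, mem_powersetCard_univ, and_iff_right hJ])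
  rw [insert_erase hj, filter_filter, filter_filter] at hsum
  rw [← hsum]
  exact hc j _ (erase_subset_erase j (subset_univ J)) (by rw [card_erase_of_mem hj, hJ]) hKnf

lemma IsBdCycle.eq_zero_of_add_one_mem (hn : 2 ≤ n) (hc : IsBdCycle k c) (hJ : #J = k)
    (hJnf : ¬ FrozenIn univ J) (hj : j ∈ J) (hj1 : j + 1 ∈ J) : c J = 0 := by
  have hj1K : j + 1 ∈ J.erase j := mem_erase.mpr ⟨Fin.add_one_ne_self hn j, hj1⟩
  have hKnf : ¬ FrozenIn univ (J.erase j) := not_frozenIn_univ_of_two_le_card_exits <|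
    (two_le_card_exits_of_not_frozenIn_univ ⟨j, hj⟩ hJnf).trans
      (card_le_card (exits_subset_exits_erase hj1))
  have hempty : (powersetCard k univ).filter
      (fun J' => ¬ FrozenIn univ J' ∧ bdSet (j + 1) J' = J.erase j) = ∅ :=
    filter_eq_empty_iff.mpr fun _ _ h => notMem_bdSet_self (h.2 ▸ hj1K)
  simpa [hempty] using
    hc.add_sum_eq_zero hJ hJnf hj ⟨_, hj1K⟩ (not_frozenIn_erase hKnf (by rwa [insert_erase hj]))

lemma IsBdCycle.eq_zero_of_forall_add_one_notMem (hk : 3 ≤ k) (hc : IsBdCycle k c)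
    (hJ : #J = k) (hJnf : ¬ FrozenIn univ J) (hsep : ∀ j ∈ J, j + 1 ∉ J) : c J = 0 := by
  obtain ⟨j, hj⟩ : J.Nonempty := card_pos.mp (by omega)
  have hKcard : #(J.erase j) = k - 1 := by rw [card_erase_of_mem hj, hJ]
  have hj1K : j + 1 ∉ J.erase j := fun h => hsep j hj (mem_of_mem_erase h)
  -- every element of `J.erase j` stays an exit of any set squeezed between it and `J ∪ {j + 1}`
  have hexits (T : Finset (Fin n)) (hKT : J.erase j ⊆ T) (hTJ : T ⊆ insert (j + 1) J) :
      ¬ FrozenIn univ T := by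
    refine not_frozenIn_univ_of_two_le_card_exits <|
      (show 2 ≤ #(J.erase j) by omega).trans (card_le_card fun x hx => ?_)
    refine mem_exits.mpr ⟨hKT hx, fun hx1 => ?_⟩
    rcases mem_insert.mp (hTJ hx1) with h | h
    · exact (mem_erase.mp hx).1 (add_right_cancel h)
    · exact hsep x (mem_of_mem_erase hx) h
  have hKnf := hexits _ subset_rfl ((erase_subset j J).trans (subset_insert _ _))
  have hK1nf := hexits _ (subset_insert _ _) (insert_subset_insert _ (erase_subset j J))
  have hzero := hc (j + 1) (J.erase j)
    (fun x hx => mem_erase.mpr ⟨ne_of_mem_of_not_mem hx hj1K, mem_univ x⟩) hKcard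
    (not_frozenIn_erase hKnf hK1nf)
  have hrel := hc.add_sum_eq_zero hJ hJnf hj (card_pos.mp (by omega))
    (not_frozenIn_erase hKnf (by rwa [insert_erase hj]))
  rwa [hzero, add_zero] at hrel

end Cycle

/-- the boundary map `∂ = ∂_1 + ⋯ + ∂_n` on `𝔅^{(∅)}` is injective:
if the weights `c` on nonfrozen `k`-subsets satisfy, for every `j` and every
nonfrozen `(k−1)`-subset `K` of `{1,…,n}∖{j}`, `Σ_{∂_j(J) = K} c_J = 0`, then
`c = 0`. -/
theorem stmt11 {n k : ℕ} (hk : 3 ≤ k) (hkn : k ≤ n - 2)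
    (c : Finset (Fin n) → ℝ)
    (hbd : ∀ j : Fin n, ∀ K : Finset (Fin n),
      K ⊆ univ.erase j → K.card = k - 1 → ¬ FrozenIn (univ.erase j) K →
      ∑ J ∈ (powersetCard k (univ : Finset (Fin n))).filter
          (fun J => ¬ FrozenIn univ J ∧ bdSet j J = K), c J = 0) :
    ∀ J : Finset (Fin n), J.card = k → ¬ FrozenIn univ J → c J = 0 := by
  intro J hJ hJnf
  have : NeZero n := ⟨by omega⟩
  by_cases hconsec : ∃ j ∈ J, j + 1 ∈ J
  · obtain ⟨j, hj, hj1⟩ := hconsec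
    exact IsBdCycle.eq_zero_of_add_one_mem (by omega) hbd hJ hJnf hj hj1
  · push Not at hconsec
    exact IsBdCycle.eq_zero_of_forall_add_one_notMem hk hbd hJ hJnf hconsec
end

section
/- Let 2 ≤ k ≤ n−1, let J be any k-element subset of {1,…,n}, and let j ∈ {1,…,n}. Then in 𝔅^{({j})}: ∂_j(𝓛_J) = 𝓛^{({j})}_{J∖{j}} if j ∈ J, and ∂_j(𝓛_J) = 0 if j ∉ J. -/
open Finset

/-!
Write `K_T` (`predReplace J T`) for `J` with the initial points in `T` replaced by their
predecessors, so that `𝓛_J = Σ_T (-1)^(1+|T|) β_{K_T}`. Since `∂_j` maps frozen sets to frozen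
sets, `∂_j β_K = β^{({j})}_{∂_j K}` for every `K`.

If `j ∉ J`, let `a` be the first element of `J` after `j`. It is an initial point, and toggling it
does not change `∂_j K_T`: `∂_j` removes `a` from `K_T` and `a - 1` from `K_{T ∪ {a}}`, leaving
the same set. So the terms cancel in pairs.

If `j ∈ J`, the terms with `j ∉ T` match the terms of `𝓛^{({j})}_{J∖{j}}` with the same `T`,
since `∂_j` just removes `j`. If `j ∈ T`, which needs `j - 1 ∉ J`, there are two cases. When
`j + 1 ∈ J`, the term matches the one for `T ∖ {j} ∪ {j + 1}`, because the predecessor of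
`j + 1` in `S = {1,…,n} ∖ {j}` is `j - 1`. When `j + 1 ∉ J`, the terms cancel in pairs as before,
with `a` the first element of `J ∖ {j}` after `j`.
-/

open Fin.CommRing

namespace CyclicBoundary

lemma sum_powerset_eq_zero_of_insert {α M : Type*} [DecidableEq α] [AddCommGroup M]
    {a : α} {I : Finset α} (ha : a ∈ I) (f : Finset α → M)
    (h : ∀ T ⊆ I.erase a, f (insert a T) = -f T) : ∑ T ∈ I.powerset, f T = 0 := by
  rw [← insert_erase ha, sum_powerset_insert (notMem_erase a I), ← sum_add_distrib]
  exact sum_eq_zero fun T hT => by rw [h T (mem_powerset.mp hT), add_neg_cancel]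

lemma neg_one_pow_card_insert {α R : Type*} [DecidableEq α] [Ring R] {a : α} {T : Finset α}
    (ha : a ∉ T) : (-1 : R) ^ (1 + (insert a T).card) = -(-1) ^ (1 + T.card) := by
  rw [card_insert_of_notMem ha, ← add_assoc, pow_succ, mul_neg_one]

variable {n : ℕ}

lemma sub_val_add_sub_val {a b : Fin n} (h : a ≠ b) : (a - b).val + (b - a).val = n := by
  have := a.isLt
  have := b.isLt
  rcases lt_or_gt_of_ne h with h | h
  · rw [Fin.coe_sub_iff_lt.mpr h, Fin.sub_val_of_le h.le]
    have := Fin.lt_def.mp h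
    omega
  · rw [Fin.sub_val_of_le h.le, Fin.coe_sub_iff_lt.mpr h]
    have := Fin.lt_def.mp h
    omega

lemma mem_cInterval {u v x : Fin n} : x ∈ cInterval u v ↔ (x - u).val ≤ (v - u).val := by
  simp [cInterval]

lemma bdMap_sum {ι : Type*} (L : Finset (Fin n)) (j : Fin n) (s : Finset ι)
    (f : ι → Finset (Fin n) → ℝ) : bdMap L j (∑ i ∈ s, f i) = ∑ i ∈ s, bdMap L j (f i) := by
  simp only [bdMap, Finset.sum_apply, Finset.sum_smul]
  exact Finset.sum_comm

lemma bdMap_smul (L : Finset (Fin n)) (j : Fin n) (c : ℝ) (x : Finset (Fin n) → ℝ) :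
    bdMap L j (c • x) = c • bdMap L j x := by
  simp only [bdMap, Pi.smul_apply, smul_eq_mul, mul_smul, Finset.smul_sum]

lemma betaV_of_frozenIn {L A : Finset (Fin n)} (h : FrozenIn (univ \ L) A) : betaV L A = 0 :=
  if_pos h

lemma bdMap_betaV (L : Finset (Fin n)) (j : Fin n) (A : Finset (Fin n)) :
    bdMap L j (betaV L A) =
      if FrozenIn (univ \ L) A then 0 else betaV (insert j L) (bdSet j A) := by
  by_cases hA : FrozenIn (univ \ L) A
  · simp [hA, betaV_of_frozenIn, bdMap]
  · rw [if_neg hA, betaV, if_neg hA, bdMap,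
      Finset.sum_eq_single_of_mem A (mem_univ A) fun K _ hK => by simp [hK]]
    simp

variable [NeZero n]

lemma val_one_of_two_le (hn : 2 ≤ n) : ((1 : Fin n) : ℕ) = 1 := by
  rw [Fin.val_one', Nat.mod_eq_of_lt (by omega)]

-- `(x - j).val` is the number of forward steps from `j` to `x`; `nextIn K j` minimises it on `K`.
lemma sub_val_eq_zero_iff {x j : Fin n} : (x - j).val = 0 ↔ x = j := by
  rw [Fin.val_eq_zero_iff, sub_eq_zero]

lemma eq_of_sub_val_eq {x y j : Fin n} (h : (x - j).val = (y - j).val) : x = y :=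
  sub_left_inj.mp (Fin.ext h)

lemma sub_one_sub_val {x j : Fin n} (hx : x ≠ j) : (x - 1 - j).val = (x - j).val - 1 := by
  rw [sub_right_comm, Fin.val_sub_one_of_ne_zero (sub_ne_zero.mpr hx)]

lemma add_one_sub_val (hn : 2 ≤ n) (j : Fin n) : (j + 1 - j).val = 1 := by
  rw [add_sub_cancel_left, val_one_of_two_le hn]

lemma sub_one_sub_val_self (hn : 2 ≤ n) (j : Fin n) : (j - 1 - j).val = n - 1 := by
  have hj : j - 1 ≠ j := fun h => by
    have h1 := congrArg Fin.val (sub_eq_self.mp h)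
    rw [val_one_of_two_le hn, Fin.val_zero] at h1
    exact one_ne_zero h1
  have h := sub_val_add_sub_val hj
  rw [sub_sub_cancel, val_one_of_two_le hn] at h
  omega

lemma add_one_ne_self (hn : 2 ≤ n) (x : Fin n) : x + 1 ≠ x := fun h => by
  have := add_one_sub_val hn x
  rw [h, sub_self, Fin.val_zero] at this
  exact zero_ne_one this

lemma sub_one_ne_self (hn : 2 ≤ n) (x : Fin n) : x - 1 ≠ x := fun h => by
  have := sub_one_sub_val_self hn x
  rw [h, sub_self, Fin.val_zero] at this
  omega

lemma sub_one_ne_add_one (hn : 3 ≤ n) (x : Fin n) : x - 1 ≠ x + 1 := fun h => by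
  have := sub_one_sub_val_self (by omega) x
  rw [h, add_one_sub_val (by omega)] at this
  omega

lemma cpred_eq_sub_one (x : Fin n) : cpred x = x - 1 := by
  apply Fin.ext
  rw [Fin.val_sub, Fin.val_one']
  show (x.val + (n - 1)) % n = _
  rcases (show n = 1 ∨ 2 ≤ n by have := NeZero.ne n; omega) with rfl | hn
  · simp
  · rw [Nat.mod_eq_of_lt (by omega : 1 < n), add_comm]

lemma prevIn_of_sub_one_mem {S : Finset (Fin n)} {x : Fin n} (h : x - 1 ∈ S) :
    prevIn S x = x - 1 := by
  have h0 : (0 : Fin n) ∈ univ.filter fun r => cpred x - r ∈ S := by simpa [cpred_eq_sub_one]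
  rw [prevIn, dif_pos ⟨0, h0⟩, le_antisymm (min'_le _ _ h0) (Fin.zero_le _), sub_zero,
    cpred_eq_sub_one]

lemma prevIn_sdiff_singleton_add_one (hn : 2 ≤ n) (j : Fin n) :
    prevIn (univ \ {j}) (j + 1) = j - 1 := by
  set F := univ.filter fun r : Fin n => cpred (j + 1) - r ∈ univ \ {j}
  have hc : cpred (j + 1) = j := by rw [cpred_eq_sub_one, add_sub_cancel_right]
  have h1 : (1 : Fin n) ∈ F := by simpa [F, hc] using sub_one_ne_self hn j
  have hmin : F.min' ⟨1, h1⟩ = 1 := by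
    have hle := Fin.le_def.mp (min'_le F 1 h1)
    have hne : (F.min' ⟨1, h1⟩).val ≠ 0 := fun h0 => by
      have hmem := min'_mem F ⟨1, h1⟩
      rw [Fin.val_eq_zero_iff.mp h0] at hmem
      simp [F, hc] at hmem
    rw [val_one_of_two_le hn] at hle
    exact Fin.ext (by rw [val_one_of_two_le hn]; omega)
  rw [prevIn, dif_pos ⟨1, h1⟩, hmin, hc]

lemma nextIn_mem {K : Finset (Fin n)} (hK : K.Nonempty) (j : Fin n) : nextIn K j ∈ K := by
  obtain ⟨y, hy⟩ := hK
  have hne : (univ.filter fun r => j + r ∈ K).Nonempty := ⟨y - j, by simpa⟩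
  rw [nextIn, dif_pos hne]
  simpa using min'_mem _ hne

lemma nextIn_sub_val_le {K : Finset (Fin n)} {j x : Fin n} (hx : x ∈ K) :
    (nextIn K j - j).val ≤ (x - j).val := by
  have hmem : x - j ∈ univ.filter fun r => j + r ∈ K := by simpa
  rw [nextIn, dif_pos ⟨_, hmem⟩, add_sub_cancel_left]
  exact Fin.le_def.mp (min'_le _ _ hmem)

lemma nextIn_eq {K : Finset (Fin n)} {j y : Fin n} (hy : y ∈ K)
    (hmin : ∀ x ∈ K, (y - j).val ≤ (x - j).val) : nextIn K j = y :=
  eq_of_sub_val_eq (le_antisymm (nextIn_sub_val_le hy) (hmin _ (nextIn_mem ⟨y, hy⟩ j)))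

lemma nextIn_of_mem {K : Finset (Fin n)} {j : Fin n} (hj : j ∈ K) : nextIn K j = j :=
  nextIn_eq hj fun x _ => by simp

lemma cInterval_self (u : Fin n) : cInterval u u = {u} := by
  ext x
  rw [mem_cInterval, sub_self, Fin.val_zero, Nat.le_zero, sub_val_eq_zero_iff, mem_singleton]

lemma erase_cInterval_left {u v : Fin n} (h : u ≠ v) :
    (cInterval u v).erase u = cInterval (u + 1) v := by
  have hn : 2 ≤ n := by
    have := v.isLt
    have := Fin.val_ne_of_ne h
    omega
  have e : ∀ y : Fin n, y - (u + 1) = y - 1 - u := fun y => by ring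
  have hv := sub_one_sub_val h.symm
  have hv0 : (v - u).val ≠ 0 := fun h0 => h (sub_val_eq_zero_iff.mp h0).symm
  have hvn := (v - u).isLt
  ext x
  rw [mem_erase, mem_cInterval, mem_cInterval, e, e, hv]
  by_cases hx : x = u
  · subst hx
    rw [sub_one_sub_val_self hn]
    omega
  · rw [sub_one_sub_val hx]
    omega

lemma nextIn_cInterval {u v j : Fin n} (hj : j ∉ cInterval u v) : nextIn (cInterval u v) j = u := by
  have hu : u ∈ cInterval u v := mem_cInterval.mpr (by simp)
  have hju : j ≠ u := fun h => hj (h ▸ hu)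
  have hlt : (v - u).val < (j - u).val := not_le.mp (mem_cInterval.not.mp hj)
  refine nextIn_eq hu fun x hx => ?_
  have hx' := mem_cInterval.mp hx
  have hsum := sub_val_add_sub_val hju
  rw [← sub_add_sub_cancel x u j, Fin.val_add_eq_of_add_lt (by omega)]
  omega

lemma frozenIn_bdSet (j : Fin n) {K : Finset (Fin n)} (h : FrozenIn univ K) :
    FrozenIn (univ \ {j}) (bdSet j K) := by
  obtain ⟨u, v, rfl⟩ : ∃ u v, K = cInterval u v := by simpa [FrozenIn] using h
  by_cases hj : j ∈ cInterval u v
  · exact ⟨u, v, by ext x; simp [bdSet, nextIn_of_mem hj]⟩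
  rw [bdSet, nextIn_cInterval hj]
  by_cases huv : u = v
  · subst huv
    exact ⟨j, j, by simp [cInterval_self]⟩
  · rw [erase_cInterval_left huv]
    refine ⟨u + 1, v, (inter_eq_right.mpr fun x hx => ?_).symm⟩
    rw [← erase_cInterval_left huv] at hx
    simpa using fun hxj : x = j => hj (hxj ▸ mem_of_mem_erase hx)

lemma bdMap_betaV_empty_of_bdSet_eq {j : Fin n} {A A' : Finset (Fin n)}
    (h : bdSet j A = A') : bdMap ∅ j (betaV ∅ A) = betaV {j} A' := by
  rw [bdMap_betaV, sdiff_empty, insert_empty_eq, h]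
  split_ifs with hA
  · rw [betaV_of_frozenIn (h ▸ frozenIn_bdSet j hA)]
  · rfl

lemma bdMap_betaV_empty_congr {j : Fin n} {A A' : Finset (Fin n)} (h : bdSet j A = bdSet j A') :
    bdMap ∅ j (betaV ∅ A) = bdMap ∅ j (betaV ∅ A') := by
  rw [bdMap_betaV_empty_of_bdSet_eq h, bdMap_betaV_empty_of_bdSet_eq rfl]

/-- The set `K_M` of the paper for `S = {1,…,n}`, with `T` the set of initial points `i_r`
having `m_r = 1`. -/
def predReplace (J T : Finset (Fin n)) : Finset (Fin n) :=
  (J \ T) ∪ T.image (· - 1)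

lemma mem_predReplace {J T : Finset (Fin n)} {x : Fin n} :
    x ∈ predReplace J T ↔ (x ∈ J ∧ x ∉ T) ∨ x + 1 ∈ T := by
  simp only [predReplace, mem_union, mem_sdiff, mem_image]
  refine or_congr_right ⟨?_, fun h => ⟨x + 1, h, add_sub_cancel_right x 1⟩⟩
  rintro ⟨i, hi, rfl⟩
  rwa [sub_add_cancel]

lemma mem_initPts_univ {J : Finset (Fin n)} {i : Fin n} :
    i ∈ initPts univ J ↔ i ∈ J ∧ i - 1 ∉ J := by
  rw [initPts, mem_filter, prevIn_of_sub_one_mem (mem_univ _)]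

lemma image_prevIn_sdiff_singleton {T : Finset (Fin n)} {j : Fin n} (h : ∀ i ∈ T, i - 1 ≠ j) :
    T.image (prevIn (univ \ {j})) = T.image (· - 1) :=
  image_congr fun i hi => prevIn_of_sub_one_mem (by simpa using h i hi)

lemma bdMap_LElt_empty (j : Fin n) (J : Finset (Fin n)) :
    bdMap ∅ j (LElt ∅ J) = ∑ T ∈ (initPts univ J).powerset,
      (-1 : ℝ) ^ (1 + T.card) • bdMap ∅ j (betaV ∅ (predReplace J T)) := by
  have hprev : prevIn (univ \ (∅ : Finset (Fin n))) = (· - 1) := by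
    ext1 x
    exact prevIn_of_sub_one_mem (by simp)
  rw [LElt, hprev, bdMap_sum, sdiff_empty]
  simp only [bdMap_smul, predReplace]

lemma predReplace_insert {J T : Finset (Fin n)} {a : Fin n} (ha : a + 1 ∉ T) :
    predReplace J (insert a T) = insert (a - 1) ((predReplace J T).erase a) := by
  ext x
  simp only [mem_predReplace, mem_insert, mem_erase]
  grind

lemma bdSet_insert_sub_one_erase {X : Finset (Fin n)} {j a : Fin n} (hX : nextIn X j = a)
    (haj : a ≠ j) (ha1X : a - 1 ∉ X) :
    bdSet j (insert (a - 1) (X.erase a)) = bdSet j X := by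
  have hd := sub_one_sub_val haj
  have hnext : nextIn (insert (a - 1) (X.erase a)) j = a - 1 := by
    refine nextIn_eq (mem_insert_self _ _) fun x hx => ?_
    rcases mem_insert.mp hx with rfl | hx
    · exact le_rfl
    · have := hX ▸ nextIn_sub_val_le (j := j) (mem_of_mem_erase hx)
      omega
  rw [bdSet, bdSet, hnext, hX, erase_insert fun h => ha1X (mem_of_mem_erase h)]

lemma nextIn_sub_one_not_mem {K : Finset (Fin n)} {j : Fin n} (hjK : j ∉ K) (hK : K.Nonempty) :
    nextIn K j - 1 ∉ K := by
  intro h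
  have haj : nextIn K j ≠ j := fun e => hjK (e ▸ nextIn_mem hK j)
  have := nextIn_sub_val_le (j := j) h
  rw [sub_one_sub_val haj] at this
  have : (nextIn K j - j).val ≠ 0 := fun h0 => haj (sub_val_eq_zero_iff.mp h0)
  omega

lemma nextIn_predReplace (hn : 2 ≤ n) {J T : Finset (Fin n)} {j a : Fin n} (haJ : a ∈ J)
    (haT : a ∉ T) (hmin : ∀ x ∈ J, x ≠ j → (a - j).val ≤ (x - j).val)
    (hT : ∀ i ∈ T, i ∈ J) (hj : j ∈ J → j ∈ T) : nextIn (predReplace J T) j = a := by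
  refine nextIn_eq (mem_predReplace.mpr (Or.inl ⟨haJ, haT⟩)) fun x hx => ?_
  rcases mem_predReplace.mp hx with ⟨hxJ, hxT⟩ | hx1
  · exact hmin x hxJ fun e => hxT (e ▸ hj (e ▸ hxJ))
  by_cases hx1j : x + 1 = j
  · obtain rfl : x = j - 1 := eq_sub_of_add_eq hx1j
    rw [sub_one_sub_val_self hn]
    exact Nat.le_sub_one_of_lt (a - j).isLt
  · have h1 := hmin _ (hT _ hx1) hx1j
    have h2 := sub_one_sub_val hx1j
    rw [add_sub_cancel_right] at h2
    by_contra hlt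
    have : x + 1 = a := eq_of_sub_val_eq (j := j) (by omega)
    exact haT (this ▸ hx1)

lemma bdSet_predReplace_insert (hn : 2 ≤ n) {J T : Finset (Fin n)} {j a : Fin n}
    (haJ : a ∈ J) (haj : a ≠ j) (ha1 : a - 1 ∉ J)
    (hmin : ∀ x ∈ J, x ≠ j → (a - j).val ≤ (x - j).val)
    (hT : ∀ i ∈ T, i ∈ J ∧ i - 1 ∉ J) (haT : a ∉ T) (hj : j ∈ J → j ∈ T) :
    bdSet j (predReplace J (insert a T)) = bdSet j (predReplace J T) := by
  have ha1T : a + 1 ∉ T := fun h => (hT _ h).2 (by rwa [add_sub_cancel_right])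
  rw [predReplace_insert ha1T]
  refine bdSet_insert_sub_one_erase
    (nextIn_predReplace hn haJ haT hmin (fun i hi => (hT i hi).1) hj) haj ?_
  rw [mem_predReplace, sub_add_cancel]
  exact fun h => h.elim (fun h => ha1 h.1) haT

lemma bdMap_LElt_empty_of_not_mem (hn : 2 ≤ n) {J : Finset (Fin n)} {j : Fin n} (hjJ : j ∉ J)
    (hJ : J.Nonempty) : bdMap ∅ j (LElt ∅ J) = 0 := by
  set a := nextIn J j
  have haJ : a ∈ J := nextIn_mem hJ j
  have haj : a ≠ j := fun h => hjJ (h ▸ haJ)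
  have ha1 : a - 1 ∉ J := nextIn_sub_one_not_mem hjJ hJ
  rw [bdMap_LElt_empty]
  refine sum_powerset_eq_zero_of_insert (mem_initPts_univ.mpr ⟨haJ, ha1⟩) _ fun T hT => ?_
  have haT : a ∉ T := fun h => notMem_erase a _ (hT h)
  have hTinit : ∀ i ∈ T, i ∈ J ∧ i - 1 ∉ J := fun i hi =>
    mem_initPts_univ.mp (mem_of_mem_erase (hT hi))
  rw [neg_one_pow_card_insert haT, neg_smul, bdMap_betaV_empty_congr
    (bdSet_predReplace_insert hn haJ haj ha1 (fun x hx _ => nextIn_sub_val_le hx) hTinit haT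
      fun h => absurd h hjJ)]

lemma bdSet_predReplace_of_mem {J T : Finset (Fin n)} {j : Fin n} (hjJ : j ∈ J) (hjT : j ∉ T)
    (hj1T : j + 1 ∉ T) : bdSet j (predReplace J T) = predReplace (J.erase j) T := by
  rw [bdSet, nextIn_of_mem (mem_predReplace.mpr (Or.inl ⟨hjJ, hjT⟩))]
  ext x
  simp only [mem_erase, mem_predReplace]
  grind

lemma bdMap_betaV_predReplace_of_mem {J T : Finset (Fin n)} {j : Fin n} (hjJ : j ∈ J)
    (hT : T ⊆ (initPts univ J).erase j) :
    bdMap ∅ j (betaV ∅ (predReplace J T)) =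
      betaV {j} ((J.erase j \ T) ∪ T.image (prevIn (univ \ {j}))) := by
  have hTinit : ∀ i ∈ T, i - 1 ∉ J := fun i hi =>
    (mem_initPts_univ.mp (mem_of_mem_erase (hT hi))).2
  have hjT : j ∉ T := fun h => notMem_erase j _ (hT h)
  have hj1T : j + 1 ∉ T := fun h => hTinit _ h (by rwa [add_sub_cancel_right])
  rw [image_prevIn_sdiff_singleton fun i hi e => hTinit i hi (e ▸ hjJ)]
  exact bdMap_betaV_empty_of_bdSet_eq (bdSet_predReplace_of_mem hjJ hjT hj1T)

lemma bdMap_betaV_predReplace_insert_self (hn : 3 ≤ n) {J T : Finset (Fin n)} {j : Fin n}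
    (hjJ : j ∈ J) (hj1J : j + 1 ∈ J) (hT : T ⊆ (initPts univ J).erase j) :
    bdMap ∅ j (betaV ∅ (predReplace J (insert j T))) =
      betaV {j} ((J.erase j \ insert (j + 1) T) ∪
        (insert (j + 1) T).image (prevIn (univ \ {j}))) := by
  have hTinit : ∀ i ∈ T, i - 1 ∉ J := fun i hi =>
    (mem_initPts_univ.mp (mem_of_mem_erase (hT hi))).2
  have hjT : j ∉ T := fun h => notMem_erase j _ (hT h)
  have hj1T : j + 1 ∉ T := fun h => hTinit _ h (by rwa [add_sub_cancel_right])
  have hj2T : j + 1 + 1 ∉ T := fun h => hTinit _ h (by rwa [add_sub_cancel_right])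
  have hj1 : j + 1 ∉ insert j T := by
    rw [mem_insert]
    exact fun h => h.elim (add_one_ne_self (by omega) j) hj1T
  have hnext : nextIn (predReplace J (insert j T)) j = j + 1 := by
    refine nextIn_eq (mem_predReplace.mpr (Or.inl ⟨hj1J, hj1⟩)) fun x hx => ?_
    rw [add_one_sub_val (by omega)]
    have hxj : x ≠ j := by
      rintro rfl
      rw [mem_predReplace] at hx
      exact hx.elim (fun h => h.2 (mem_insert_self x T)) hj1
    exact Nat.one_le_iff_ne_zero.mpr fun h0 => hxj (sub_val_eq_zero_iff.mp h0)
  rw [image_insert, prevIn_sdiff_singleton_add_one (by omega),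
    image_prevIn_sdiff_singleton fun i hi e => hTinit i hi (e ▸ hjJ)]
  refine bdMap_betaV_empty_of_bdSet_eq ?_
  rw [bdSet, hnext]
  have hj := sub_one_ne_add_one hn j
  ext x
  simp only [mem_erase, mem_predReplace, mem_union, mem_insert, mem_sdiff, mem_image]
  grind

lemma sum_bdMap_betaV_predReplace_insert_eq_zero (hn : 2 ≤ n) {J : Finset (Fin n)} {j : Fin n}
    (hjJ : j ∈ J) (hpJ : j - 1 ∉ J) (hj1J : j + 1 ∉ J) (hJ : (J.erase j).Nonempty) :
    ∑ T ∈ ((initPts univ J).erase j).powerset, (-1 : ℝ) ^ (1 + (insert j T).card) •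
      bdMap ∅ j (betaV ∅ (predReplace J (insert j T))) = 0 := by
  set a := nextIn (J.erase j) j
  have haJ' : a ∈ J.erase j := nextIn_mem hJ j
  have haj : a ≠ j := ne_of_mem_erase haJ'
  have haJ : a ∈ J := mem_of_mem_erase haJ'
  have ha1j : a - 1 ≠ j := fun h => hj1J (by rwa [← h, sub_add_cancel])
  have ha1 : a - 1 ∉ J := fun h =>
    nextIn_sub_one_not_mem (notMem_erase j J) hJ (mem_erase.mpr ⟨ha1j, h⟩)
  have haI : a ∈ (initPts univ J).erase j := mem_erase.mpr ⟨haj, mem_initPts_univ.mpr ⟨haJ, ha1⟩⟩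
  refine sum_powerset_eq_zero_of_insert haI _ fun T hT => ?_
  have haT : a ∉ insert j T := by
    rw [mem_insert]
    exact fun h => h.elim haj fun h => notMem_erase a _ (hT h)
  have hTinit : ∀ i ∈ insert j T, i ∈ J ∧ i - 1 ∉ J := by
    intro i hi
    rcases mem_insert.mp hi with rfl | hi
    · exact ⟨hjJ, hpJ⟩
    · exact mem_initPts_univ.mp (mem_of_mem_erase (mem_of_mem_erase (hT hi)))
  rw [insert_comm, neg_one_pow_card_insert haT, neg_smul, bdMap_betaV_empty_congr
    (bdSet_predReplace_insert hn haJ haj ha1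
      (fun x hx hxj => nextIn_sub_val_le (mem_erase.mpr ⟨hxj, hx⟩)) hTinit haT
      fun _ => mem_insert_self j T)]

lemma erase_initPts_sdiff_singleton {J : Finset (Fin n)} {j : Fin n} (hjJ : j ∈ J) :
    (initPts (univ \ {j}) (J.erase j)).erase (j + 1) = (initPts univ J).erase j := by
  ext i
  by_cases hi : i - 1 = j
  · obtain rfl : i = j + 1 := by rw [← hi, sub_add_cancel]
    simp [mem_initPts_univ, hjJ]
  · have hprev : prevIn (univ \ {j}) i = i - 1 := prevIn_of_sub_one_mem (by simpa using hi)
    have hij : i ≠ j + 1 := fun h => hi (by rw [h, add_sub_cancel_right])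
    rw [mem_erase, mem_erase, mem_initPts_univ, initPts, mem_filter, hprev, mem_erase,
      mem_erase]
    grind

lemma add_one_mem_initPts_sdiff_singleton (hn : 2 ≤ n) {J : Finset (Fin n)} {j : Fin n} :
    j + 1 ∈ initPts (univ \ {j}) (J.erase j) ↔ j + 1 ∈ J ∧ j - 1 ∉ J := by
  rw [initPts, mem_filter, prevIn_sdiff_singleton_add_one hn, mem_erase, mem_erase,
    and_iff_right (add_one_ne_self hn j), not_and, imp_iff_right (sub_one_ne_self hn j)]

lemma bdMap_LElt_empty_of_mem (hn : 3 ≤ n) {J : Finset (Fin n)} {j : Fin n} (hjJ : j ∈ J)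
    (hJ : (J.erase j).Nonempty) : bdMap ∅ j (LElt ∅ J) = LElt {j} (J.erase j) := by
  have hn2 : 2 ≤ n := by omega
  rw [bdMap_LElt_empty, LElt]
  set I := initPts univ J
  set I' := initPts (univ \ {j}) (J.erase j)
  have hII' : I'.erase (j + 1) = I.erase j := erase_initPts_sdiff_singleton hjJ
  have hA : ∀ T ∈ (I.erase j).powerset,
      (-1 : ℝ) ^ (1 + T.card) • bdMap ∅ j (betaV ∅ (predReplace J T)) =
        (-1 : ℝ) ^ (1 + T.card) • betaV {j} ((J.erase j \ T) ∪ T.image (prevIn (univ \ {j}))) :=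
    fun T hT => by rw [bdMap_betaV_predReplace_of_mem hjJ (mem_powerset.mp hT)]
  by_cases hpJ : j - 1 ∈ J
  · have hI : I.erase j = I := erase_eq_of_notMem fun h => (mem_initPts_univ.mp h).2 hpJ
    have hI' : I' = I := by
      rw [← hI, ← hII', erase_eq_of_notMem fun h =>
        ((add_one_mem_initPts_sdiff_singleton hn2).mp h).2 hpJ]
    rw [hI', ← hI]
    exact sum_congr rfl hA
  have hjI : j ∈ I := mem_initPts_univ.mpr ⟨hjJ, hpJ⟩
  rw [← insert_erase hjI, sum_powerset_insert (notMem_erase j I), sum_congr rfl hA]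
  by_cases hj1J : j + 1 ∈ J
  · have hj1I' : j + 1 ∈ I' := (add_one_mem_initPts_sdiff_singleton hn2).mpr ⟨hj1J, hpJ⟩
    rw [← insert_erase hj1I', sum_powerset_insert (notMem_erase _ _), hII']
    refine congrArg _ (sum_congr rfl fun T hT => ?_)
    have hT := mem_powerset.mp hT
    have hjT : j ∉ T := fun h => notMem_erase j I (hT h)
    have hj1T : j + 1 ∉ T := fun h =>
      (mem_initPts_univ.mp (mem_of_mem_erase (hT h))).2 (by rwa [add_sub_cancel_right])
    rw [neg_one_pow_card_insert hjT, neg_one_pow_card_insert hj1T,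
      bdMap_betaV_predReplace_insert_self hn hjJ hj1J hT]
  · have hI' : I' = I.erase j := by
      rw [← hII', erase_eq_of_notMem fun h =>
        hj1J ((add_one_mem_initPts_sdiff_singleton hn2).mp h).1]
    rw [hI', add_eq_left]
    exact sum_bdMap_betaV_predReplace_insert_eq_zero hn2 hjJ hpJ hj1J hJ

end CyclicBoundary

/-- for a `k`-subset `J` and `j ∈ {1,…,n}`:
`∂_j(𝓛_J) = 𝓛^{({j})}_{J∖{j}}` if `j ∈ J`, and `∂_j(𝓛_J) = 0` otherwise. -/
theorem stmt12 {n k : ℕ} (hk : 2 ≤ k) (hkn : k ≤ n - 1)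
    (J : Finset (Fin n)) (hJ : J.card = k) (j : Fin n) :
    bdMap ∅ j (LElt ∅ J) = if j ∈ J then LElt {j} (J.erase j) else 0 := by
  have hn : 3 ≤ n := by omega
  have : NeZero n := ⟨by omega⟩
  split_ifs with hjJ
  · refine CyclicBoundary.bdMap_LElt_empty_of_mem hn hjJ ?_
    rw [← card_pos, card_erase_of_mem hjJ]
    omega
  · exact CyclicBoundary.bdMap_LElt_empty_of_not_mem (by omega) hjJ (card_pos.mp (by omega))
end
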